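/- arXiv:math/0302072 — 3 statements merged into one kernel-verified Lean document; each statement's English description precedes it below -/
import Mathlib

section
/- For every natural number j ≥ 2, there exists a nonzero finite signed measure μ on the unit tangent bundle S(S^{2j}) of the standard round sphere S^{2j} of constant curvature 1 such that: (i) μ is invariant under the geodesic flow G_t for every t ∈ ℝ, (ii) μ is invariant under the flip map σ, and (iii) the pushforward of μ under the canonical projection π : S(S^{2j}) → S^{2j} is the zero measure. -/
open MeasureTheory Real RealInnerProductSpace

noncomputable section

/-- `ℝ^{n+1}`, the ambient Euclidean space of the `n`-sphere. -/
abbrev Euc (n : ℕ) : Type := EuclideanSpace ℝ (Fin (n + 1))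

/-- The unit tangent bundle `S(Sⁿ)` of the standard round sphere
`Sⁿ ⊆ ℝ^{n+1}` of constant curvature 1, realized as the set of pairs `(x, v)`
with `‖x‖ = 1`, `‖v‖ = 1` and `⟨x, v⟩ = 0`. -/
def UnitTangentSphere (n : ℕ) : Set (Euc n × Euc n) :=
  {p | ‖p.1‖ = 1 ∧ ‖p.2‖ = 1 ∧ ⟪p.1, p.2⟫ = 0}

lemma norm_eq_one_of_sq (a : ℝ) (h0 : 0 ≤ a) (h : a ^ 2 = 1) : a = 1 := by
  have h1 : (a - 1) * (a + 1) = 0 := by nlinarith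
  rcases mul_eq_zero.1 h1 with h2 | h2 <;> linarith

lemma geodesicFlow_mem {n : ℕ} (t : ℝ) {p : Euc n × Euc n}
    (hp : p ∈ UnitTangentSphere n) :
    (cos t • p.1 + sin t • p.2, -sin t • p.1 + cos t • p.2) ∈ UnitTangentSphere n := by
  obtain ⟨hx, hv, hxv⟩ := hp
  have hvx : ⟪p.2, p.1⟫ = 0 := by rw [real_inner_comm]; exact hxv
  have hxx : ⟪p.1, p.1⟫ = 1 := by
    rw [real_inner_self_eq_norm_mul_norm, hx]; ring
  have hvv : ⟪p.2, p.2⟫ = 1 := by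
    rw [real_inner_self_eq_norm_mul_norm, hv]; ring
  have hpyth := sin_sq_add_cos_sq t
  refine ⟨?_, ?_, ?_⟩
  · apply norm_eq_one_of_sq _ (norm_nonneg _)
    rw [norm_add_sq_real, inner_smul_left, inner_smul_right, norm_smul, norm_smul, hx, hv, hxv]
    simp [sq_abs]
  · apply norm_eq_one_of_sq _ (norm_nonneg _)
    rw [norm_add_sq_real, inner_smul_left, inner_smul_right, norm_smul, norm_smul, hx, hv, hxv]
    simp [sq_abs]
  · simp only [inner_add_left, inner_add_right, inner_smul_left, inner_smul_right,
      hxx, hvv, hxv, hvx, RCLike.star_def, conj_trivial]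
    ring

/-- The geodesic flow `G_t` on the unit tangent bundle of the round sphere:
`G_t (x, v) = (cos t • x + sin t • v, -sin t • x + cos t • v)`. -/
def geodesicFlow (n : ℕ) (t : ℝ) (p : UnitTangentSphere n) : UnitTangentSphere n :=
  ⟨(cos t • (p : Euc n × Euc n).1 + sin t • (p : Euc n × Euc n).2,
    -sin t • (p : Euc n × Euc n).1 + cos t • (p : Euc n × Euc n).2),
   geodesicFlow_mem t p.2⟩

lemma flip_mem {n : ℕ} {p : Euc n × Euc n} (hp : p ∈ UnitTangentSphere n) :
    ((p.1, -p.2) : Euc n × Euc n) ∈ UnitTangentSphere n := by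
  obtain ⟨hx, hv, hxv⟩ := hp
  exact ⟨hx, by simpa using hv, by simpa using hxv⟩

/-- The flip map `σ (x, v) = (x, -v)` on the unit tangent bundle. -/
def flipMap (n : ℕ) (p : UnitTangentSphere n) : UnitTangentSphere n :=
  ⟨((p : Euc n × Euc n).1, -(p : Euc n × Euc n).2), flip_mem p.2⟩

/-- The canonical projection `π : S(Sⁿ) → Sⁿ`, `π (x, v) = x`. -/
def sphereProj (n : ℕ) (p : UnitTangentSphere n) : Metric.sphere (0 : Euc n) 1 :=
  ⟨(p : Euc n × Euc n).1, by
    rw [mem_sphere_zero_iff_norm]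
    exact p.2.1⟩


namespace Sutton

instance : Fact (0 < 2 * π) := ⟨by positivity⟩

abbrev T := AddCircle (2 * π)

noncomputable def cc : T → ℝ := Real.cos_periodic.lift
noncomputable def ss : T → ℝ := Real.sin_periodic.lift

@[simp] lemma cc_coe (s : ℝ) : cc (s : T) = cos s := rfl
@[simp] lemma ss_coe (s : ℝ) : ss (s : T) = sin s := rfl

lemma continuous_cc : Continuous cc := Real.continuous_cos.quotient_liftOn' _
lemma continuous_ss : Continuous ss := Real.continuous_sin.quotient_liftOn' _

lemma cc_add (x : T) (u : ℝ) : cc (x + (u : T)) = cc x * cos u - ss x * sin u := by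
  refine QuotientAddGroup.induction_on x fun s => ?_
  rw [← AddCircle.coe_add, cc_coe, cc_coe, ss_coe, cos_add]

lemma ss_add (x : T) (u : ℝ) : ss (x + (u : T)) = ss x * cos u + cc x * sin u := by
  refine QuotientAddGroup.induction_on x fun s => ?_
  rw [← AddCircle.coe_add, ss_coe, ss_coe, cc_coe, sin_add]

lemma cc_sq_add_ss_sq (x : T) : cc x ^ 2 + ss x ^ 2 = 1 := by
  refine QuotientAddGroup.induction_on x fun s => ?_
  rw [cc_coe, ss_coe, add_comm]
  exact sin_sq_add_cos_sq s

noncomputable def qtr : T := ((π / 2 : ℝ) : T)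

lemma cc_qtr (x : T) : cc (x + qtr) = - ss x := by
  rw [qtr, cc_add, cos_pi_div_two, sin_pi_div_two]; ring

lemma ss_qtr (x : T) : ss (x + qtr) = cc x := by
  rw [qtr, ss_add, cos_pi_div_two, sin_pi_div_two]; ring

lemma cc_sub_qtr (x : T) : cc (x - qtr) = ss x := by
  have : x - qtr = x + ((-(π/2) : ℝ) : T) := by
    rw [qtr, sub_eq_add_neg, ← AddCircle.coe_neg]
  rw [this, cc_add, cos_neg, sin_neg, cos_pi_div_two, sin_pi_div_two]; ring

lemma ss_sub_qtr (x : T) : ss (x - qtr) = - cc x := by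
  have : x - qtr = x + ((-(π/2) : ℝ) : T) := by
    rw [qtr, sub_eq_add_neg, ← AddCircle.coe_neg]
  rw [this, ss_add, cos_neg, sin_neg, cos_pi_div_two, sin_pi_div_two]; ring


variable {n : ℕ}

noncomputable def emb (n : ℕ) (a b c d : ℝ) : Euc n :=
  a • EuclideanSpace.single (0 : Fin (n+1)) (1:ℝ)
    + b • EuclideanSpace.single (1 : Fin (n+1)) (1:ℝ)
    + c • EuclideanSpace.single (2 : Fin (n+1)) (1:ℝ)
    + d • EuclideanSpace.single (3 : Fin (n+1)) (1:ℝ)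

section distinct
variable (hn : 4 ≤ n)
include hn

lemma v0 : ((0 : Fin (n+1)) : ℕ) = 0 := rfl
lemma v1 : ((1 : Fin (n+1)) : ℕ) = 1 := Nat.mod_eq_of_lt (by show (1:ℕ) < n + 1; omega)
lemma v2 : ((2 : Fin (n+1)) : ℕ) = 2 := Nat.mod_eq_of_lt (by show (2:ℕ) < n + 1; omega)
lemma v3 : ((3 : Fin (n+1)) : ℕ) = 3 := Nat.mod_eq_of_lt (by show (3:ℕ) < n + 1; omega)

lemma ne01 : (0 : Fin (n+1)) ≠ 1 := by rw [Ne, Fin.ext_iff, v0 hn, v1 hn]; norm_num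
lemma ne02 : (0 : Fin (n+1)) ≠ 2 := by rw [Ne, Fin.ext_iff, v0 hn, v2 hn]; norm_num
lemma ne03 : (0 : Fin (n+1)) ≠ 3 := by rw [Ne, Fin.ext_iff, v0 hn, v3 hn]; norm_num
lemma ne12 : (1 : Fin (n+1)) ≠ 2 := by rw [Ne, Fin.ext_iff, v1 hn, v2 hn]; norm_num
lemma ne13 : (1 : Fin (n+1)) ≠ 3 := by rw [Ne, Fin.ext_iff, v1 hn, v3 hn]; norm_num
lemma ne23 : (2 : Fin (n+1)) ≠ 3 := by rw [Ne, Fin.ext_iff, v2 hn, v3 hn]; norm_num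

omit hn in
lemma sing (i j : Fin (n+1)) :
    ⟪EuclideanSpace.single i (1:ℝ), EuclideanSpace.single j (1:ℝ)⟫ = if i = j then 1 else 0 := by
  rw [EuclideanSpace.inner_single_left, EuclideanSpace.single_apply]
  simp [eq_comm]

lemma emb_inner (a b c d a' b' c' d' : ℝ) :
    ⟪emb n a b c d, emb n a' b' c' d'⟫ = a*a' + b*b' + c*c' + d*d' := by
  have h01 := ne01 hn; have h02 := ne02 hn; have h03 := ne03 hn
  have h12 := ne12 hn; have h13 := ne13 hn; have h23 := ne23 hn
  simp only [emb, inner_add_left, inner_add_right, real_inner_smul_left,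
    real_inner_smul_right]
  repeat rw [sing]
  rw [if_pos rfl, if_pos rfl, if_pos rfl, if_pos rfl, if_neg h01, if_neg h02, if_neg h03, if_neg h01.symm, if_neg h12, if_neg h13,
    if_neg h02.symm, if_neg h12.symm, if_neg h23, if_neg h03.symm, if_neg h13.symm,
    if_neg h23.symm]
  ring

lemma emb_apply0 (a b c d : ℝ) : emb n a b c d 0 = a := by
  have h01 := ne01 hn; have h02 := ne02 hn; have h03 := ne03 hn
  simp [emb, PiLp.add_apply, PiLp.smul_apply, EuclideanSpace.single_apply,
    h01, h02, h03]

lemma emb_apply1 (a b c d : ℝ) : emb n a b c d 1 = b := by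
  have h01 := (ne01 hn).symm; have h12 := ne12 hn; have h13 := ne13 hn
  simp [emb, PiLp.add_apply, PiLp.smul_apply, EuclideanSpace.single_apply,
    h01, h12, h13]

lemma emb_apply2 (a b c d : ℝ) : emb n a b c d 2 = c := by
  have h02 := (ne02 hn).symm; have h12 := (ne12 hn).symm; have h23 := ne23 hn
  simp [emb, PiLp.add_apply, PiLp.smul_apply, EuclideanSpace.single_apply,
    h02, h12, h23]

lemma emb_apply3 (a b c d : ℝ) : emb n a b c d 3 = d := by
  have h03 := (ne03 hn).symm; have h13 := (ne13 hn).symm; have h23 := (ne23 hn).symm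
  simp [emb, PiLp.add_apply, PiLp.smul_apply, EuclideanSpace.single_apply,
    h03, h13, h23]

end distinct

lemma emb_comb (r s a b c d a' b' c' d' : ℝ) :
    r • emb n a b c d + s • emb n a' b' c' d'
      = emb n (r*a+s*a') (r*b+s*b') (r*c+s*c') (r*d+s*d') := by
  unfold emb
  module

lemma emb_smul (r a b c d : ℝ) :
    r • emb n a b c d = emb n (r*a) (r*b) (r*c) (r*d) := by
  unfold emb
  module

lemma continuous_emb : Continuous fun v : ℝ × ℝ × ℝ × ℝ => emb n v.1 v.2.1 v.2.2.1 v.2.2.2 := by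
  unfold emb
  fun_prop


noncomputable def fA (n : ℕ) (p : T × T) : Euc n :=
  (Real.sqrt 2)⁻¹ • emb n (cc p.1) (ss p.1) (cc p.2) (ss p.2)

lemma sqrt2_inv_mul : (Real.sqrt 2)⁻¹ * (Real.sqrt 2)⁻¹ = (2:ℝ)⁻¹ := by
  rw [← mul_inv, Real.mul_self_sqrt (by norm_num)]

lemma fA_inner (hn : 4 ≤ n) (p q : T × T) :
    ⟪fA n p, fA n q⟫ =
      (cc p.1 * cc q.1 + ss p.1 * ss q.1 + cc p.2 * cc q.2 + ss p.2 * ss q.2) / 2 := by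
  rw [fA, fA, real_inner_smul_left, real_inner_smul_right, emb_inner hn, ← mul_assoc,
    sqrt2_inv_mul]
  ring

lemma fA_norm (hn : 4 ≤ n) (p : T × T) : ‖fA n p‖ = 1 := by
  refine norm_eq_one_of_sq _ (norm_nonneg _) ?_
  rw [← real_inner_self_eq_norm_sq, fA_inner hn]
  have h1 := cc_sq_add_ss_sq p.1
  have h2 := cc_sq_add_ss_sq p.2
  nlinarith [h1, h2]

noncomputable def F1 (n : ℕ) (p : T × T) : Euc n × Euc n :=
  (fA n p, fA n (p.1 + qtr, p.2 + qtr))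

noncomputable def F2 (n : ℕ) (p : T × T) : Euc n × Euc n :=
  (fA n p, fA n (p.1 + qtr, p.2 - qtr))

lemma F1_mem (hn : 4 ≤ n) (p : T × T) : F1 n p ∈ UnitTangentSphere n := by
  refine ⟨fA_norm hn p, fA_norm hn _, ?_⟩
  show ⟪fA n p, fA n (p.1 + qtr, p.2 + qtr)⟫ = 0
  rw [fA_inner hn]
  simp only [cc_qtr, ss_qtr]
  ring

lemma F2_mem (hn : 4 ≤ n) (p : T × T) : F2 n p ∈ UnitTangentSphere n := by
  refine ⟨fA_norm hn p, fA_norm hn _, ?_⟩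
  show ⟪fA n p, fA n (p.1 + qtr, p.2 - qtr)⟫ = 0
  rw [fA_inner hn]
  simp only [cc_qtr, ss_qtr, cc_sub_qtr, ss_sub_qtr]
  ring

lemma fA_comb (r s : ℝ) (p q p' : T × T)
    (h1 : r * cc p.1 + s * cc q.1 = cc p'.1)
    (h2 : r * ss p.1 + s * ss q.1 = ss p'.1)
    (h3 : r * cc p.2 + s * cc q.2 = cc p'.2)
    (h4 : r * ss p.2 + s * ss q.2 = ss p'.2) :
    r • fA n p + s • fA n q = fA n p' := by
  rw [fA, fA, fA, smul_comm r, smul_comm s, ← smul_add, emb_comb, h1, h2, h3, h4]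

-- flow identities
lemma flow_F1a (u : ℝ) (p : T × T) :
    cos u • fA n p + sin u • fA n (p.1 + qtr, p.2 + qtr)
      = fA n (p.1 + (u : T), p.2 + (u : T)) := by
  refine fA_comb _ _ _ _ _ ?_ ?_ ?_ ?_ <;>
    simp only [cc_qtr, ss_qtr, cc_add, ss_add] <;> ring

lemma flow_F1b (u : ℝ) (p : T × T) :
    -sin u • fA n p + cos u • fA n (p.1 + qtr, p.2 + qtr)
      = fA n (p.1 + (u : T) + qtr, p.2 + (u : T) + qtr) := by
  refine fA_comb _ _ _ _ _ ?_ ?_ ?_ ?_ <;>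
    simp only [cc_qtr, ss_qtr, cc_add, ss_add] <;> ring

lemma flow_F2a (u : ℝ) (p : T × T) :
    cos u • fA n p + sin u • fA n (p.1 + qtr, p.2 - qtr)
      = fA n (p.1 + (u : T), p.2 - (u : T)) := by
  have e1 : p.2 - (u : T) = p.2 + ((-u : ℝ) : T) := by
    rw [sub_eq_add_neg, ← AddCircle.coe_neg]
  refine fA_comb _ _ _ _ _ ?_ ?_ ?_ ?_ <;>
    simp only [e1, cc_qtr, ss_qtr, cc_sub_qtr, ss_sub_qtr, cc_add, ss_add, cos_neg,
      sin_neg] <;> ring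

lemma flow_F2b (u : ℝ) (p : T × T) :
    -sin u • fA n p + cos u • fA n (p.1 + qtr, p.2 - qtr)
      = fA n (p.1 + (u : T) + qtr, p.2 - (u : T) - qtr) := by
  have e1 : p.2 - (u : T) = p.2 + ((-u : ℝ) : T) := by
    rw [sub_eq_add_neg, ← AddCircle.coe_neg]
  have e2 : p.2 - (u : T) - qtr = (p.2 + ((-u : ℝ) : T)) - qtr := by rw [e1]
  refine fA_comb _ _ _ _ _ ?_ ?_ ?_ ?_ <;>
    simp only [e1, e2, cc_qtr, ss_qtr, cc_sub_qtr, ss_sub_qtr, cc_add, ss_add, cos_neg,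
      sin_neg] <;> ring

-- the test map and set
noncomputable def Rmap (n : ℕ) (z : Euc n) : Euc n :=
  emb n (-(z 1)) (z 0) (-(z 3)) (z 2)

lemma Rmap_fA (hn : 4 ≤ n) (p : T × T) :
    Rmap n (fA n p) = fA n (p.1 + qtr, p.2 + qtr) := by
  have c0 : fA n p 0 = (Real.sqrt 2)⁻¹ * cc p.1 := by
    rw [fA, PiLp.smul_apply, emb_apply0 hn, smul_eq_mul]
  have c1 : fA n p 1 = (Real.sqrt 2)⁻¹ * ss p.1 := by
    rw [fA, PiLp.smul_apply, emb_apply1 hn, smul_eq_mul]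
  have c2 : fA n p 2 = (Real.sqrt 2)⁻¹ * cc p.2 := by
    rw [fA, PiLp.smul_apply, emb_apply2 hn, smul_eq_mul]
  have c3 : fA n p 3 = (Real.sqrt 2)⁻¹ * ss p.2 := by
    rw [fA, PiLp.smul_apply, emb_apply3 hn, smul_eq_mul]
  rw [Rmap, c0, c1, c2, c3, fA, emb_smul]
  simp only [cc_qtr, ss_qtr]
  congr 1 <;> ring

lemma fA_apply (hn : 4 ≤ n) (p : T × T) :
    fA n p 0 = (Real.sqrt 2)⁻¹ * cc p.1 ∧ fA n p 1 = (Real.sqrt 2)⁻¹ * ss p.1 ∧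
    fA n p 2 = (Real.sqrt 2)⁻¹ * cc p.2 ∧ fA n p 3 = (Real.sqrt 2)⁻¹ * ss p.2 := by
  refine ⟨?_, ?_, ?_, ?_⟩ <;>
    rw [fA, PiLp.smul_apply, smul_eq_mul]
  · rw [emb_apply0 hn]
  · rw [emb_apply1 hn]
  · rw [emb_apply2 hn]
  · rw [emb_apply3 hn]


lemma continuous_fA : Continuous (fA n) := by
  refine Continuous.const_smul (M := ℝ) (g := fun p : T × T => emb n (cc p.1) (ss p.1) (cc p.2) (ss p.2)) ?_ _
  have h := (continuous_emb (n := n)).comp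
    ((continuous_cc.comp continuous_fst).prodMk
      ((continuous_ss.comp continuous_fst).prodMk
        ((continuous_cc.comp continuous_snd).prodMk
          (continuous_ss.comp continuous_snd))))
  exact h

noncomputable def G1 (n : ℕ) (hn : 4 ≤ n) (p : T × T) : UnitTangentSphere n :=
  ⟨F1 n p, F1_mem hn p⟩

noncomputable def G2 (n : ℕ) (hn : 4 ≤ n) (p : T × T) : UnitTangentSphere n :=
  ⟨F2 n p, F2_mem hn p⟩

lemma continuous_shift (a b : T) : Continuous (fun p : T × T => (p.1 + a, p.2 + b)) :=
  (continuous_fst.add continuous_const).prodMk (continuous_snd.add continuous_const)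

lemma continuous_G1 (hn : 4 ≤ n) : Continuous (G1 n hn) := by
  apply Continuous.subtype_mk
  exact continuous_fA.prodMk (continuous_fA.comp ((continuous_fst.add continuous_const).prodMk (continuous_snd.add continuous_const)))

lemma continuous_G2 (hn : 4 ≤ n) : Continuous (G2 n hn) := by
  apply Continuous.subtype_mk
  exact continuous_fA.prodMk (continuous_fA.comp ((continuous_fst.add continuous_const).prodMk (continuous_snd.sub continuous_const)))

lemma continuous_geodesicFlow (t : ℝ) : Continuous (geodesicFlow n t) := by
  apply Continuous.subtype_mk
  exact (((continuous_const (y := cos t)).smul (continuous_fst.comp continuous_subtype_val)).add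
      ((continuous_const (y := sin t)).smul (continuous_snd.comp continuous_subtype_val))).prodMk
    (((continuous_const (y := -sin t)).smul (continuous_fst.comp continuous_subtype_val)).add
      ((continuous_const (y := cos t)).smul (continuous_snd.comp continuous_subtype_val)))

lemma continuous_flipMap : Continuous (flipMap n) := by
  apply Continuous.subtype_mk
  exact (continuous_fst.comp continuous_subtype_val).prodMk
    (continuous_snd.comp continuous_subtype_val).neg

lemma continuous_sphereProj : Continuous (sphereProj n) := by
  apply Continuous.subtype_mk
  exact continuous_fst.comp continuous_subtype_val

lemma continuous_proj_apply (i : Fin (n+1)) : Continuous fun z : Euc n => z i := by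
  exact (continuous_apply i).comp (PiLp.continuous_ofLp (p := 2) ..)

lemma continuous_Rmap : Continuous (Rmap n) := by
  unfold Rmap
  have h := (continuous_emb (n := n)).comp
    (((continuous_proj_apply (n := n) 1).neg).prodMk
      ((continuous_proj_apply (n := n) 0).prodMk
        (((continuous_proj_apply (n := n) 3).neg).prodMk (continuous_proj_apply (n := n) 2))))
  exact h

-- geodesic flow on subtype level
lemma flow_G1 (hn : 4 ≤ n) (u : ℝ) (p : T × T) :
    geodesicFlow n u (G1 n hn p) = G1 n hn (p.1 + (u : T), p.2 + (u : T)) := by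
  apply Subtype.ext
  show (_, _) = F1 n _
  rw [F1]
  exact Prod.ext (flow_F1a u p) (flow_F1b u p)

lemma flow_G2 (hn : 4 ≤ n) (u : ℝ) (p : T × T) :
    geodesicFlow n u (G2 n hn p) = G2 n hn (p.1 + (u : T), p.2 - (u : T)) := by
  apply Subtype.ext
  show (_, _) = F2 n _
  rw [F2]
  exact Prod.ext (flow_F2a u p) (flow_F2b u p)

lemma flow_flip (u : ℝ) (p : UnitTangentSphere n) :
    geodesicFlow n u (flipMap n p) = flipMap n (geodesicFlow n (-u) p) := by
  apply Subtype.ext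
  simp only [geodesicFlow, flipMap, cos_neg, sin_neg, Prod.mk.injEq]
  constructor <;> module

lemma flip_flip (p : UnitTangentSphere n) : flipMap n (flipMap n p) = p := by
  apply Subtype.ext
  simp [flipMap]


lemma sqrt2_inv_ne_zero : (Real.sqrt 2)⁻¹ ≠ 0 :=
  inv_ne_zero (Real.sqrt_ne_zero'.mpr (by norm_num))

lemma half_cancel {a b : ℝ} (h : (Real.sqrt 2)⁻¹ * a = (Real.sqrt 2)⁻¹ * b) : a = b :=
  mul_left_cancel₀ sqrt2_inv_ne_zero h

lemma not_cc_ss_zero (x : T) (h1 : cc x = 0) (h2 : ss x = 0) : False := by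
  have := cc_sq_add_ss_sq x
  rw [h1, h2] at this
  norm_num at this

lemma mp_shift (a b : T) :
    MeasurePreserving (fun p : T × T => (p.1 + a, p.2 + b)) volume volume := by
  rw [Measure.volume_eq_prod]
  exact (measurePreserving_add_right volume a).prod (measurePreserving_add_right volume b)

instance : IsFiniteMeasure (volume : Measure (T × T)) := by
  rw [Measure.volume_eq_prod]; infer_instance

lemma toSignedMeasure_congr {α : Type*} [MeasurableSpace α] {m m' : Measure α}
    [IsFiniteMeasure m] [IsFiniteMeasure m'] (h : m = m') :
    m.toSignedMeasure = m'.toSignedMeasure := by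
  subst h; rfl

lemma map_toSignedMeasure_sub {α β : Type*} [MeasurableSpace α] [MeasurableSpace β]
    (m m' : Measure α) [IsFiniteMeasure m] [IsFiniteMeasure m'] {g : α → β}
    (hg : Measurable g) :
    (m.toSignedMeasure - m'.toSignedMeasure).map g
      = (m.map g).toSignedMeasure - (m'.map g).toSignedMeasure := by
  ext A hA
  rw [VectorMeasure.map_apply _ hg hA, VectorMeasure.sub_apply, VectorMeasure.sub_apply,
    Measure.toSignedMeasure_apply_measurable hA,
    Measure.toSignedMeasure_apply_measurable hA,
    Measure.toSignedMeasure_apply_measurable (hg hA),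
    Measure.toSignedMeasure_apply_measurable (hg hA),
    measureReal_def, measureReal_def, measureReal_def, measureReal_def,
    Measure.map_apply hg hA, Measure.map_apply hg hA]


end Sutton

/- **Sutton's theorem (signed measure form).** For `j ≥ 2`, there is a nonzero
finite signed measure on the unit tangent bundle `S(S^{2j})` of the standard
round sphere of constant curvature 1 that is invariant under the geodesic flow
`G_t` for every `t` and under the flip map `σ`, and whose pushforward under the
canonical projection `π : S(S^{2j}) → S^{2j}` is the zero measure. -/
open Sutton in
/-- **Sutton's theorem (signed measure form).** For `j ≥ 2`, there is a nonzero
finite signed measure on the unit tangent bundle `S(S^{2j})` of the standard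
round sphere of constant curvature 1 that is invariant under the geodesic flow
`G_t` for every `t` and under the flip map `σ`, and whose pushforward under the
canonical projection `π : S(S^{2j}) → S^{2j}` is the zero measure. -/
theorem exists_even_invariant_signedMeasure_proj_zero (j : ℕ) (hj : 2 ≤ j) :
    ∃ μ : SignedMeasure (UnitTangentSphere (2 * j)),
      μ ≠ 0 ∧
      (∀ t : ℝ, μ.map (geodesicFlow (2 * j) t) = μ) ∧
      μ.map (flipMap (2 * j)) = μ ∧
      μ.map (sphereProj (2 * j)) = 0 := by
  have hn4 : 4 ≤ 2 * j := by omega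
  revert hn4
  generalize 2 * j = n
  intro hn
  classical
  have hG1 : Measurable (G1 n hn) := (continuous_G1 hn).measurable
  have hG2 : Measurable (G2 n hn) := (continuous_G2 hn).measurable
  have hσ : Measurable (flipMap n) := continuous_flipMap.measurable
  have hφ : ∀ t : ℝ, Measurable (geodesicFlow n t) :=
    fun t => (continuous_geodesicFlow t).measurable
  have hπ : Measurable (sphereProj n) := continuous_sphereProj.measurable
  set ν : Measure (T × T) := volume with hν
  haveI i1 : IsFiniteMeasure (ν.map (G1 n hn)) := Measure.isFiniteMeasure_map ν _
  haveI i2 : IsFiniteMeasure (ν.map (flipMap n ∘ G1 n hn)) := Measure.isFiniteMeasure_map ν _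
  haveI i3 : IsFiniteMeasure (ν.map (G2 n hn)) := Measure.isFiniteMeasure_map ν _
  haveI i4 : IsFiniteMeasure (ν.map (flipMap n ∘ G2 n hn)) := Measure.isFiniteMeasure_map ν _
  set m1 : Measure (UnitTangentSphere n) :=
    ν.map (G1 n hn) + ν.map (flipMap n ∘ G1 n hn) with hm1
  set m2 : Measure (UnitTangentSphere n) :=
    ν.map (G2 n hn) + ν.map (flipMap n ∘ G2 n hn) with hm2
  -- coercion helper on T
  have ecoe : ∀ (x : T) (u : ℝ), x + ((-u : ℝ) : T) = x - (u : T) := by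
    intro x u
    rw [AddCircle.coe_neg, sub_eq_add_neg]
  -- flow invariance of the four pieces
  have inv1 : ∀ u : ℝ, (ν.map (G1 n hn)).map (geodesicFlow n u) = ν.map (G1 n hn) := by
    intro u
    rw [Measure.map_map (hφ u) hG1]
    have e : (geodesicFlow n u) ∘ (G1 n hn)
        = (G1 n hn) ∘ (fun p : T × T => (p.1 + (u : T), p.2 + (u : T))) :=
      funext fun p => flow_G1 hn u p
    rw [e, ← Measure.map_map hG1 (mp_shift _ _).measurable, (mp_shift ((u:T)) ((u:T))).map_eq]
  have inv1' : ∀ u : ℝ, (ν.map (flipMap n ∘ G1 n hn)).map (geodesicFlow n u)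
      = ν.map (flipMap n ∘ G1 n hn) := by
    intro u
    rw [Measure.map_map (hφ u) (hσ.comp hG1)]
    have e : (geodesicFlow n u) ∘ (flipMap n ∘ G1 n hn)
        = (flipMap n ∘ G1 n hn) ∘
            (fun p : T × T => (p.1 + ((-u : ℝ) : T), p.2 + ((-u : ℝ) : T))) := by
      funext p
      show geodesicFlow n u (flipMap n (G1 n hn p)) = _
      rw [flow_flip, flow_G1 hn (-u) p]
      rfl
    rw [e, ← Measure.map_map (hσ.comp hG1) (mp_shift _ _).measurable, (mp_shift _ _).map_eq]
  have inv2 : ∀ u : ℝ, (ν.map (G2 n hn)).map (geodesicFlow n u) = ν.map (G2 n hn) := by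
    intro u
    rw [Measure.map_map (hφ u) hG2]
    have e : (geodesicFlow n u) ∘ (G2 n hn)
        = (G2 n hn) ∘ (fun p : T × T => (p.1 + (u : T), p.2 + ((-u : ℝ) : T))) := by
      funext p
      show geodesicFlow n u (G2 n hn p) = _
      rw [flow_G2 hn u p]
      show _ = G2 n hn (p.1 + (u:T), p.2 + ((-u : ℝ) : T))
      rw [ecoe]
    rw [e, ← Measure.map_map hG2 (mp_shift _ _).measurable, (mp_shift _ _).map_eq]
  have inv2' : ∀ u : ℝ, (ν.map (flipMap n ∘ G2 n hn)).map (geodesicFlow n u)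
      = ν.map (flipMap n ∘ G2 n hn) := by
    intro u
    rw [Measure.map_map (hφ u) (hσ.comp hG2)]
    have e : (geodesicFlow n u) ∘ (flipMap n ∘ G2 n hn)
        = (flipMap n ∘ G2 n hn) ∘
            (fun p : T × T => (p.1 + ((-u : ℝ) : T), p.2 + (u : T))) := by
      funext p
      show geodesicFlow n u (flipMap n (G2 n hn p)) = _
      rw [flow_flip, flow_G2 hn (-u) p]
      show flipMap n (G2 n hn (p.1 + ((-u:ℝ) : T), p.2 - ((-u:ℝ) : T))) = _
      congr 2
      rw [AddCircle.coe_neg, sub_neg_eq_add]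
    rw [e, ← Measure.map_map (hσ.comp hG2) (mp_shift _ _).measurable, (mp_shift _ _).map_eq]
  -- the witness set
  set A : Set (UnitTangentSphere n) :=
    {p | (p : Euc n × Euc n).2 = Rmap n (p : Euc n × Euc n).1} with hAdef
  have hAm : MeasurableSet A :=
    (isClosed_eq (continuous_snd.comp continuous_subtype_val)
      (continuous_Rmap.comp (continuous_fst.comp continuous_subtype_val))).measurableSet
  -- preimage computations
  have p1 : G1 n hn ⁻¹' A = Set.univ := by
    ext p
    simp only [Set.mem_preimage, Set.mem_univ, iff_true, hAdef, Set.mem_setOf_eq]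
    exact (Rmap_fA hn p).symm
  have p2 : (flipMap n ∘ G1 n hn) ⁻¹' A = ∅ := by
    rw [Set.eq_empty_iff_forall_notMem]
    intro p hp
    have hp' : -(fA n (p.1 + qtr, p.2 + qtr)) = Rmap n (fA n p) := hp
    rw [Rmap_fA hn] at hp'
    obtain ⟨c0, c1, -, -⟩ := fA_apply (n := n) hn (p.1 + qtr, p.2 + qtr)
    have h0 := congrArg (fun z : Euc n => z 0) hp'
    have h1 := congrArg (fun z : Euc n => z 1) hp'
    simp only [PiLp.neg_apply] at h0 h1
    rw [c0] at h0
    rw [c1] at h1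
    have e0 : -(cc (p.1 + qtr)) = cc (p.1 + qtr) :=
      half_cancel (by rw [mul_neg]; exact h0)
    have e1 : -(ss (p.1 + qtr)) = ss (p.1 + qtr) :=
      half_cancel (by rw [mul_neg]; exact h1)
    exact not_cc_ss_zero (p.1 + qtr) (by linarith) (by linarith)
  have p3 : G2 n hn ⁻¹' A = ∅ := by
    rw [Set.eq_empty_iff_forall_notMem]
    intro p hp
    have hp' : fA n (p.1 + qtr, p.2 - qtr) = Rmap n (fA n p) := hp
    rw [Rmap_fA hn] at hp'
    obtain ⟨-, -, c2, c3⟩ := fA_apply (n := n) hn (p.1 + qtr, p.2 - qtr)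
    obtain ⟨-, -, d2, d3⟩ := fA_apply (n := n) hn (p.1 + qtr, p.2 + qtr)
    have h2 := congrArg (fun z : Euc n => z 2) hp'
    have h3 := congrArg (fun z : Euc n => z 3) hp'
    simp only [] at h2 h3
    rw [c2, d2] at h2
    rw [c3, d3] at h3
    have e2 := half_cancel h2
    have e3 := half_cancel h3
    simp only [cc_sub_qtr, cc_qtr, ss_sub_qtr, ss_qtr] at e2 e3
    exact not_cc_ss_zero p.2 (by linarith) (by linarith)
  have p4 : (flipMap n ∘ G2 n hn) ⁻¹' A = ∅ := by
    rw [Set.eq_empty_iff_forall_notMem]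
    intro p hp
    have hp' : -(fA n (p.1 + qtr, p.2 - qtr)) = Rmap n (fA n p) := hp
    rw [Rmap_fA hn] at hp'
    obtain ⟨c0, c1, -, -⟩ := fA_apply (n := n) hn (p.1 + qtr, p.2 - qtr)
    obtain ⟨d0, d1, -, -⟩ := fA_apply (n := n) hn (p.1 + qtr, p.2 + qtr)
    have h0 := congrArg (fun z : Euc n => z 0) hp'
    have h1 := congrArg (fun z : Euc n => z 1) hp'
    simp only [PiLp.neg_apply] at h0 h1
    rw [c0, d0] at h0
    rw [c1, d1] at h1
    have e0 : -(cc (p.1 + qtr)) = cc (p.1 + qtr) :=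
      half_cancel (by rw [mul_neg]; exact h0)
    have e1 : -(ss (p.1 + qtr)) = ss (p.1 + qtr) :=
      half_cancel (by rw [mul_neg]; exact h1)
    exact not_cc_ss_zero (p.1 + qtr) (by linarith) (by linarith)
  -- measure of A
  have hm1A : m1 A = ν Set.univ := by
    rw [hm1, Measure.add_apply, Measure.map_apply hG1 hAm,
      Measure.map_apply (hσ.comp hG1) hAm, p1, p2, measure_empty, add_zero]
  have hm2A : m2 A = 0 := by
    rw [hm2, Measure.add_apply, Measure.map_apply hG2 hAm,
      Measure.map_apply (hσ.comp hG2) hAm, p3, p4, measure_empty, add_zero]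
  have hνuniv : ν Set.univ = ENNReal.ofReal (2*π) * ENNReal.ofReal (2*π) := by
    rw [hν, Measure.volume_eq_prod, ← Set.univ_prod_univ, Measure.prod_prod,
      AddCircle.measure_univ]
  refine ⟨m1.toSignedMeasure - m2.toSignedMeasure, ?_, ?_, ?_, ?_⟩
  · -- nonzero
    intro h0
    have hz : (m1.toSignedMeasure - m2.toSignedMeasure) A = 0 := by
      rw [h0]; rfl
    rw [VectorMeasure.sub_apply, Measure.toSignedMeasure_apply_measurable hAm,
      Measure.toSignedMeasure_apply_measurable hAm, measureReal_def, measureReal_def, hm1A, hm2A, hνuniv] at hz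
    have hπpos : (0:ℝ) < 2*π := by positivity
    rw [ENNReal.toReal_mul, ENNReal.toReal_ofReal hπpos.le] at hz
    simp only [ENNReal.toReal_zero, sub_zero] at hz
    nlinarith [hπpos]
  · -- flow invariance
    intro t
    rw [map_toSignedMeasure_sub _ _ (hφ t)]
    have e1 : m1.map (geodesicFlow n t) = m1 := by
      rw [hm1, Measure.map_add _ _ (hφ t), inv1 t, inv1' t]
    have e2 : m2.map (geodesicFlow n t) = m2 := by
      rw [hm2, Measure.map_add _ _ (hφ t), inv2 t, inv2' t]
    rw [toSignedMeasure_congr e1, toSignedMeasure_congr e2]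
  · -- flip invariance
    rw [map_toSignedMeasure_sub _ _ hσ]
    have e1 : m1.map (flipMap n) = m1 := by
      rw [hm1, Measure.map_add _ _ hσ, Measure.map_map hσ hG1,
        Measure.map_map hσ (hσ.comp hG1)]
      have e : flipMap n ∘ (flipMap n ∘ G1 n hn) = G1 n hn :=
        funext fun p => flip_flip _
      rw [e]; exact add_comm _ _
    have e2 : m2.map (flipMap n) = m2 := by
      rw [hm2, Measure.map_add _ _ hσ, Measure.map_map hσ hG2,
        Measure.map_map hσ (hσ.comp hG2)]
      have e : flipMap n ∘ (flipMap n ∘ G2 n hn) = G2 n hn :=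
        funext fun p => flip_flip _
      rw [e]; exact add_comm _ _
    rw [toSignedMeasure_congr e1, toSignedMeasure_congr e2]
  · -- projection zero
    rw [map_toSignedMeasure_sub _ _ hπ]
    have e1 : sphereProj n ∘ G1 n hn = sphereProj n ∘ G2 n hn :=
      funext fun p => Subtype.ext rfl
    have e2 : sphereProj n ∘ (flipMap n ∘ G1 n hn) = sphereProj n ∘ G2 n hn :=
      funext fun p => Subtype.ext rfl
    have e3 : sphereProj n ∘ (flipMap n ∘ G2 n hn) = sphereProj n ∘ G2 n hn :=
      funext fun p => Subtype.ext rfl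
    have : m1.map (sphereProj n) = m2.map (sphereProj n) := by
      rw [hm1, hm2, Measure.map_add _ _ hπ, Measure.map_add _ _ hπ,
        Measure.map_map hπ hG1, Measure.map_map hπ (hσ.comp hG1),
        Measure.map_map hπ hG2, Measure.map_map hπ (hσ.comp hG2), e1, e2, e3]
    rw [toSignedMeasure_congr this, sub_self]
end
end

section
/- For every natural number j ≥ 2, even G_t-invariant finite complex measures on the unit tangent bundle S(S^{2j}) of the standard round sphere S^{2j} of constant curvature 1 are not determined by their projection to S^{2j}: there exist two distinct finite complex measures on S(S^{2j}), each invariant under the geodesic flow G_t for all t ∈ ℝ and under the flip map σ, whose pushforwards under the canonical projection π : S(S^{2j}) → S^{2j} are equal. -/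
open MeasureTheory Real RealInnerProductSpace

noncomputable section

/-! ### Auxiliary construction: Hopf-fibration measures on the unit tangent bundle -/

open Quaternion

instance : MeasurableSpace ℍ := borel ℍ
instance : BorelSpace ℍ := ⟨rfl⟩

/-- The group of unit quaternions. -/
abbrev UQ : Type := Metric.sphere (0 : ℍ) 1

/-- Extension by zero, `ℝ⁴ → ℝ^{n+1}`, as a linear map. -/
def extLin (n : ℕ) : EuclideanSpace ℝ (Fin 4) →ₗ[ℝ] Euc n where
  toFun x := WithLp.toLp 2 (fun k => if h : (k : ℕ) < 4 then x ⟨k, h⟩ else 0)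
  map_add' x y := by ext k; by_cases h : (k : ℕ) < 4 <;> simp [h]
  map_smul' c x := by ext k; by_cases h : (k : ℕ) < 4 <;> simp [h]

lemma extLin_inner (n : ℕ) (h4 : 4 ≤ n + 1) (x y : EuclideanSpace ℝ (Fin 4)) :
    ⟪extLin n x, extLin n y⟫ = ⟪x, y⟫ := by
  simp only [PiLp.inner_apply, RCLike.inner_apply, conj_trivial]
  have key : ∀ z w : EuclideanSpace ℝ (Fin 4), ∀ k : Fin (n+1),
      (extLin n z) k * (extLin n w) k
        = (fun m : ℕ => if h : m < 4 then z ⟨m, h⟩ * w ⟨m, h⟩ else 0) k := by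
    intro z w k
    by_cases h : (k : ℕ) < 4 <;> simp [extLin, h]
  refine Eq.trans (Finset.sum_congr rfl fun k _ => mul_comm _ _) ?_
  calc ∑ k : Fin (n+1), (extLin n x) k * (extLin n y) k
      = ∑ k ∈ Finset.range (n+1),
          (fun m : ℕ => if h : m < 4 then x ⟨m, h⟩ * y ⟨m, h⟩ else 0) k := by
        rw [← Fin.sum_univ_eq_sum_range]
        exact Finset.sum_congr rfl fun k _ => key x y k
    _ = ∑ k ∈ Finset.range 4,
          (fun m : ℕ => if h : m < 4 then x ⟨m, h⟩ * y ⟨m, h⟩ else 0) k := by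
        refine (Finset.sum_subset (Finset.range_subset_range.2 h4) ?_).symm
        intro k _ hk
        simp only [Finset.mem_range] at hk
        simp [hk]
    _ = ∑ k : Fin 4, x k * y k := by
        rw [← Fin.sum_univ_eq_sum_range]
        exact Finset.sum_congr rfl fun k _ => by simp [Fin.eta]
    _ = ∑ k : Fin 4, y k * x k := Finset.sum_congr rfl fun k _ => mul_comm _ _

/-- Extension by zero, `ℝ⁴ → ℝ^{n+1}`, as a linear isometry. -/
def extIso (n : ℕ) (h4 : 4 ≤ n + 1) : EuclideanSpace ℝ (Fin 4) →ₗᵢ[ℝ] Euc n :=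
  (extLin n).isometryOfInner (fun x y => extLin_inner n h4 x y)

/-- The isometric embedding of the quaternions into `ℝ^{n+1}` for `n + 1 ≥ 4`. -/
def qIso (n : ℕ) (h4 : 4 ≤ n + 1) : ℍ →ₗᵢ[ℝ] Euc n :=
  (extIso n h4).comp Quaternion.linearIsometryEquivTuple.toLinearIsometry

/-- The quaternion `i`. -/
def qI : ℍ := ⟨0, 1, 0, 0⟩

/-- The quaternion `j`. -/
def qJ : ℍ := ⟨0, 0, 1, 0⟩

/-- A "good" purely imaginary unit quaternion. -/
def Good (q : ℍ) : Prop := q.re = 0 ∧ ‖q‖ = 1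

lemma good_qI : Good qI := by
  constructor
  · rfl
  · rw [norm_eq_sqrt_real_inner, Quaternion.inner_self]
    rw [Quaternion.normSq_def']; simp [qI]

lemma good_qJ : Good qJ := by
  constructor
  · rfl
  · rw [norm_eq_sqrt_real_inner, Quaternion.inner_self]
    rw [Quaternion.normSq_def']; simp [qJ]

lemma good_neg {q : ℍ} (hq : Good q) : Good (-q) := by
  refine ⟨by simp [hq.1], by simpa using hq.2⟩

lemma good_mul_self {q : ℍ} (hq : Good q) : q * q = -1 := by
  have h2 : Quaternion.normSq q = 1 := by
    rw [Quaternion.normSq_eq_norm_mul_self, hq.2]; ring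
  have h1 := hq.1
  rw [Quaternion.normSq_def'] at h2
  ext <;> simp [Quaternion.re_mul, Quaternion.imI_mul, Quaternion.imJ_mul,
    Quaternion.imK_mul, h1] <;> nlinarith

lemma sQ_mem {n : ℕ} (h4 : 4 ≤ n + 1) {q : ℍ} (hq : Good q) (x : UQ) :
    ((qIso n h4 (x : ℍ), qIso n h4 (q * (x : ℍ))) : Euc n × Euc n)
      ∈ UnitTangentSphere n := by
  have hx : ‖(x : ℍ)‖ = 1 := mem_sphere_zero_iff_norm.1 x.2
  refine ⟨?_, ?_, ?_⟩
  · rw [(qIso n h4).norm_map, hx]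
  · rw [(qIso n h4).norm_map, norm_mul, hx, hq.2]; ring
  · rw [(qIso n h4).inner_map_map, Quaternion.inner_def, star_mul, ← mul_assoc,
      Quaternion.self_mul_star]
    simp [hq.1]

/-- The section of the unit tangent bundle given by left multiplication by the
purely imaginary unit quaternion `q` (a Hopf-fibration direction field). -/
def sQ (n : ℕ) (h4 : 4 ≤ n + 1) {q : ℍ} (hq : Good q) (x : UQ) :
    UnitTangentSphere n :=
  ⟨(qIso n h4 (x : ℍ), qIso n h4 (q * (x : ℍ))), sQ_mem h4 hq x⟩

lemma continuous_sQ (n : ℕ) (h4 : 4 ≤ n + 1) {q : ℍ} (hq : Good q) :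
    Continuous (sQ n h4 hq) := by
  apply Continuous.subtype_mk
  exact ((qIso n h4).continuous.comp continuous_subtype_val).prodMk
    ((qIso n h4).continuous.comp ((continuous_mul_left q).comp continuous_subtype_val))

lemma measurable_sQ (n : ℕ) (h4 : 4 ≤ n + 1) {q : ℍ} (hq : Good q) :
    Measurable (sQ n h4 hq) := (continuous_sQ n h4 hq).measurable

lemma continuous_geodesicFlow (n : ℕ) (t : ℝ) : Continuous (geodesicFlow n t) := by
  apply Continuous.subtype_mk
  have h1 : Continuous fun p : UnitTangentSphere n => (p : Euc n × Euc n).1 :=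
    continuous_fst.comp continuous_subtype_val
  have h2 : Continuous fun p : UnitTangentSphere n => (p : Euc n × Euc n).2 :=
    continuous_snd.comp continuous_subtype_val
  exact ((h1.const_smul (cos t)).add (h2.const_smul (sin t))).prodMk
    ((h1.const_smul (-sin t)).add (h2.const_smul (cos t)))

lemma measurable_geodesicFlow (n : ℕ) (t : ℝ) : Measurable (geodesicFlow n t) :=
  (continuous_geodesicFlow n t).measurable

lemma continuous_flipMap (n : ℕ) : Continuous (flipMap n) := by
  apply Continuous.subtype_mk
  exact (continuous_fst.comp continuous_subtype_val).prodMk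
    (continuous_snd.comp continuous_subtype_val).neg

lemma measurable_flipMap (n : ℕ) : Measurable (flipMap n) :=
  (continuous_flipMap n).measurable

lemma continuous_sphereProj (n : ℕ) : Continuous (sphereProj n) :=
  Continuous.subtype_mk (continuous_fst.comp continuous_subtype_val) _

lemma measurable_sphereProj (n : ℕ) : Measurable (sphereProj n) :=
  (continuous_sphereProj n).measurable

/-- The unit quaternion `cos t + sin t • q` for purely imaginary unit `q`. -/
def cq (t : ℝ) {q : ℍ} (hq : Good q) : UQ :=
  ⟨(cos t : ℍ) + sin t • q, by
    rw [mem_sphere_zero_iff_norm]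
    have h2 : Quaternion.normSq q = 1 := by
      rw [Quaternion.normSq_eq_norm_mul_self, hq.2]; ring
    have hre := hq.1
    have : Quaternion.normSq ((cos t : ℍ) + sin t • q) = 1 := by
      rw [Quaternion.normSq_def'] at h2 ⊢
      simp [hre]
      nlinarith [sin_sq_add_cos_sq t]
    rw [norm_eq_sqrt_real_inner, Quaternion.inner_self, this, Real.sqrt_one]⟩

lemma geodesicFlow_sq (n : ℕ) (h4 : 4 ≤ n + 1) {q : ℍ} (hq : Good q) (t : ℝ)
    (x : UQ) : geodesicFlow n t (sQ n h4 hq x) = sQ n h4 hq (cq t hq * x) := by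
  have hc : ((cq t hq * x : UQ) : ℍ) = ((cos t : ℍ) + sin t • q) * (x : ℍ) := rfl
  have hmul1 : ((cos t : ℍ) + sin t • q) * (x : ℍ)
      = cos t • (x : ℍ) + sin t • (q * (x : ℍ)) := by
    rw [add_mul, Quaternion.coe_mul_eq_smul, smul_mul_assoc]
  have hmul2 : q * (((cos t : ℍ) + sin t • q) * (x : ℍ))
      = -sin t • (x : ℍ) + cos t • (q * (x : ℍ)) := by
    rw [← mul_assoc, mul_add, Quaternion.mul_coe_eq_smul, mul_smul_comm,
      good_mul_self hq, add_mul, smul_mul_assoc, smul_mul_assoc, neg_one_mul]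
    module
  apply Subtype.ext
  show (_, _) = (_, _)
  rw [Prod.ext_iff]
  constructor
  · show cos t • qIso n h4 (x : ℍ) + sin t • qIso n h4 (q * (x : ℍ))
      = qIso n h4 ((cq t hq * x : UQ) : ℍ)
    rw [hc, hmul1, map_add, _root_.map_smul, _root_.map_smul]
  · show -sin t • qIso n h4 (x : ℍ) + cos t • qIso n h4 (q * (x : ℍ))
      = qIso n h4 (q * ((cq t hq * x : UQ) : ℍ))
    rw [hc, hmul2, map_add, _root_.map_smul, _root_.map_smul]

lemma flipMap_sq (n : ℕ) (h4 : 4 ≤ n + 1) {q : ℍ} (hq : Good q) (x : UQ) :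
    flipMap n (sQ n h4 hq x) = sQ n h4 (good_neg hq) x := by
  apply Subtype.ext
  show (_, _) = (_, _)
  rw [Prod.ext_iff]
  refine ⟨rfl, ?_⟩
  show -qIso n h4 (q * (x : ℍ)) = qIso n h4 (-q * (x : ℍ))
  rw [neg_mul, map_neg]

lemma sphereProj_sq (n : ℕ) (h4 : 4 ≤ n + 1) {q : ℍ} (hq : Good q) (x : UQ) :
    sphereProj n (sQ n h4 hq x)
      = ⟨qIso n h4 (x : ℍ), by
          rw [mem_sphere_zero_iff_norm, (qIso n h4).norm_map]
          exact mem_sphere_zero_iff_norm.1 x.2⟩ := rfl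

lemma sQ_inj {n : ℕ} (h4 : 4 ≤ n + 1) {q q' : ℍ} (hq : Good q) (hq' : Good q')
    {x y : UQ} (h : sQ n h4 hq x = sQ n h4 hq' y) : x = y ∧ q = q' := by
  have h' := Subtype.ext_iff.1 h
  rw [Prod.ext_iff] at h'
  have hinj : Function.Injective (qIso n h4) := (qIso n h4).injective
  have hxy : (x : ℍ) = (y : ℍ) := hinj h'.1
  have hq2 : q * (x : ℍ) = q' * (y : ℍ) := hinj h'.2
  rw [← hxy] at hq2
  have hx0 : (x : ℍ) ≠ 0 := ne_zero_of_mem_unit_sphere x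
  exact ⟨Subtype.ext hxy, mul_right_cancel₀ hx0 hq2⟩

lemma sQ_congr (n : ℕ) (h4 : 4 ≤ n + 1) {q q' : ℍ} (hq : Good q) (hq' : Good q')
    (h : q = q') : sQ n h4 hq = sQ n h4 hq' := by subst h; rfl

/-- Haar measure on the unit quaternions. -/
def mUQ : Measure UQ := Measure.haar

instance : IsFiniteMeasure mUQ := by
  unfold mUQ; infer_instance

lemma mUQ_left_invariant (g : UQ) : Measure.map (fun x => g * x) mUQ = mUQ := by
  unfold mUQ
  exact MeasureTheory.map_mul_left_eq_self _ g

lemma mUQ_univ_ne_zero : mUQ Set.univ ≠ 0 := by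
  have h : mUQ.IsOpenPosMeasure := by unfold mUQ; infer_instance
  exact h.open_pos _ isOpen_univ Set.univ_nonempty

/-- The flow- and flip-invariant measure on the unit tangent bundle associated
with a purely imaginary unit quaternion `q`. -/
def hopfMeas (n : ℕ) (h4 : 4 ≤ n + 1) {q : ℍ} (hq : Good q) :
    Measure (UnitTangentSphere n) :=
  mUQ.map (sQ n h4 hq) + mUQ.map (sQ n h4 (good_neg hq))

instance (n : ℕ) (h4 : 4 ≤ n + 1) {q : ℍ} (hq : Good q) :
    IsFiniteMeasure (hopfMeas n h4 hq) := by
  unfold hopfMeas; infer_instance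

lemma map_geodesicFlow_single (n : ℕ) (h4 : 4 ≤ n + 1) {q : ℍ} (hq : Good q)
    (t : ℝ) : (mUQ.map (sQ n h4 hq)).map (geodesicFlow n t)
      = mUQ.map (sQ n h4 hq) := by
  rw [Measure.map_map (measurable_geodesicFlow n t) (measurable_sQ n h4 hq)]
  have hfun : (geodesicFlow n t ∘ sQ n h4 hq)
      = sQ n h4 hq ∘ fun x => cq t hq * x := by
    funext x
    exact geodesicFlow_sq n h4 hq t x
  rw [hfun, ← Measure.map_map (measurable_sQ n h4 hq)
    (continuous_mul_left (cq t hq)).measurable, mUQ_left_invariant]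

lemma map_geodesicFlow_hopf (n : ℕ) (h4 : 4 ≤ n + 1) {q : ℍ} (hq : Good q)
    (t : ℝ) : (hopfMeas n h4 hq).map (geodesicFlow n t) = hopfMeas n h4 hq := by
  unfold hopfMeas
  rw [Measure.map_add _ _ (measurable_geodesicFlow n t),
    map_geodesicFlow_single n h4 hq t, map_geodesicFlow_single n h4 (good_neg hq) t]

lemma map_flip_single (n : ℕ) (h4 : 4 ≤ n + 1) {q : ℍ} (hq : Good q)
    {q' : ℍ} (hq' : Good q') (h : q' = -q) :
    (mUQ.map (sQ n h4 hq)).map (flipMap n) = mUQ.map (sQ n h4 hq') := by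
  subst h
  rw [Measure.map_map (measurable_flipMap n) (measurable_sQ n h4 hq)]
  have hfun : (flipMap n ∘ sQ n h4 hq) = sQ n h4 hq' := by
    funext x
    exact flipMap_sq n h4 hq x
  rw [hfun]

lemma map_flip_hopf (n : ℕ) (h4 : 4 ≤ n + 1) {q : ℍ} (hq : Good q) :
    (hopfMeas n h4 hq).map (flipMap n) = hopfMeas n h4 hq := by
  unfold hopfMeas
  rw [Measure.map_add _ _ (measurable_flipMap n),
    map_flip_single n h4 hq (good_neg hq) rfl,
    map_flip_single n h4 (good_neg hq) hq (neg_neg q).symm]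
  exact add_comm _ _

lemma map_proj_single (n : ℕ) (h4 : 4 ≤ n + 1) {q : ℍ} (hq : Good q) :
    (mUQ.map (sQ n h4 hq)).map (sphereProj n)
      = mUQ.map (fun x : UQ =>
          (⟨qIso n h4 (x : ℍ), by
            rw [mem_sphere_zero_iff_norm, (qIso n h4).norm_map]
            exact mem_sphere_zero_iff_norm.1 x.2⟩ : Metric.sphere (0 : Euc n) 1)) := by
  rw [Measure.map_map (measurable_sphereProj n) (measurable_sQ n h4 hq)]
  rfl

lemma map_proj_hopf (n : ℕ) (h4 : 4 ≤ n + 1) {q q' : ℍ} (hq : Good q)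
    (hq' : Good q') : (hopfMeas n h4 hq).map (sphereProj n)
      = (hopfMeas n h4 hq').map (sphereProj n) := by
  unfold hopfMeas
  rw [Measure.map_add _ _ (measurable_sphereProj n),
    Measure.map_add _ _ (measurable_sphereProj n),
    map_proj_single n h4 hq, map_proj_single n h4 (good_neg hq),
    map_proj_single n h4 hq', map_proj_single n h4 (good_neg hq')]

/-- A finite measure, viewed as a complex measure. -/
def cm {α : Type*} [MeasurableSpace α] (ρ : Measure α) [IsFiniteMeasure ρ] :
    ComplexMeasure α :=
  ρ.toSignedMeasure.toComplexMeasure 0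

lemma cm_map {α β : Type*} [MeasurableSpace α] [MeasurableSpace β]
    (ρ : Measure α) [IsFiniteMeasure ρ] (τ : Measure β) [IsFiniteMeasure τ]
    {f : α → β} (hf : Measurable f) (h : ρ.map f = τ) :
    (cm ρ).map f = cm τ := by
  apply VectorMeasure.ext
  intro s hs
  rw [VectorMeasure.map_apply _ hf hs]
  show MeasureTheory.SignedMeasure.toComplexMeasure _ _ _ = _
  rw [SignedMeasure.toComplexMeasure_apply]
  show (⟨ρ.toSignedMeasure (f ⁻¹' s), (0 : SignedMeasure α) (f ⁻¹' s)⟩ : ℂ) = _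
  show _ = (⟨τ.toSignedMeasure s, (0 : SignedMeasure β) s⟩ : ℂ)
  rw [VectorMeasure.zero_apply, VectorMeasure.zero_apply,
    Measure.toSignedMeasure_apply_measurable (hf hs),
    Measure.toSignedMeasure_apply_measurable hs,
    measureReal_def, measureReal_def, ← Measure.map_apply hf hs, h]

lemma cm_apply {α : Type*} [MeasurableSpace α] (ρ : Measure α) [IsFiniteMeasure ρ]
    {s : Set α} (hs : MeasurableSet s) : cm ρ s = ((ρ s).toReal : ℂ) := by
  show MeasureTheory.SignedMeasure.toComplexMeasure _ _ _ = _
  rw [SignedMeasure.toComplexMeasure_apply]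
  apply Complex.ext
  · show ρ.toSignedMeasure s = _
    rw [Measure.toSignedMeasure_apply_measurable hs]
    simp
    rfl
  · show (0 : SignedMeasure α) s = _
    rw [VectorMeasure.zero_apply]
    simp
lemma cm_congr {α : Type*} [MeasurableSpace α] (ρ τ : Measure α)
    [IsFiniteMeasure ρ] [IsFiniteMeasure τ] (h : ρ = τ) : cm ρ = cm τ := by
  subst h; rfl

/-- **Sutton's theorem (complex measure form).** For `j ≥ 2`, even
`G_t`-invariant finite complex measures on the unit tangent bundle `S(S^{2j})`
of the standard round sphere of constant curvature 1 are not determined by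
their projection to `S^{2j}`: there are two distinct finite complex measures on
`S(S^{2j})`, each invariant under the geodesic flow `G_t` for all `t` and under
the flip map `σ`, with equal pushforwards under `π : S(S^{2j}) → S^{2j}`. -/

theorem exists_even_invariant_complexMeasures_ne_same_proj (j : ℕ) (hj : 2 ≤ j) :
    ∃ μ ν : ComplexMeasure (UnitTangentSphere (2 * j)),
      μ ≠ ν ∧
      (∀ t : ℝ, μ.map (geodesicFlow (2 * j) t) = μ) ∧
      μ.map (flipMap (2 * j)) = μ ∧
      (∀ t : ℝ, ν.map (geodesicFlow (2 * j) t) = ν) ∧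
      ν.map (flipMap (2 * j)) = ν ∧
      μ.map (sphereProj (2 * j)) = ν.map (sphereProj (2 * j)) := by
  have h4 : 4 ≤ 2 * j + 1 := by omega
  set n := 2 * j with hn
  refine ⟨cm (hopfMeas n h4 good_qI), cm (hopfMeas n h4 good_qJ), ?_, ?_, ?_, ?_, ?_, ?_⟩
  · -- distinctness
    intro hEq
    set A : Set (UnitTangentSphere n) :=
      Set.range (sQ n h4 good_qI) ∪ Set.range (sQ n h4 (good_neg good_qI)) with hA
    have hAm : MeasurableSet A := by
      apply MeasurableSet.union
      · exact ((isCompact_range (continuous_sQ n h4 good_qI)).isClosed).measurableSet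
      · exact ((isCompact_range (continuous_sQ n h4 (good_neg good_qI))).isClosed).measurableSet
    have hμA : hopfMeas n h4 good_qI A = mUQ Set.univ + mUQ Set.univ := by
      unfold hopfMeas
      rw [Measure.add_apply, Measure.map_apply (measurable_sQ n h4 good_qI) hAm,
        Measure.map_apply (measurable_sQ n h4 (good_neg good_qI)) hAm]
      have e1 : sQ n h4 good_qI ⁻¹' A = Set.univ := by
        apply Set.eq_univ_of_forall
        intro x
        exact Set.mem_union_left _ ⟨x, rfl⟩
      have e2 : sQ n h4 (good_neg good_qI) ⁻¹' A = Set.univ := by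
        apply Set.eq_univ_of_forall
        intro x
        exact Set.mem_union_right _ ⟨x, rfl⟩
      rw [e1, e2]
    have hqIJ : qI ≠ qJ := by
      intro h
      have := congrArg QuaternionAlgebra.imI h
      simp [qI, qJ] at this
    have hqIJ' : (-qI) ≠ qJ := by
      intro h
      have := congrArg QuaternionAlgebra.imI h
      rw [Quaternion.imI_neg] at this
      simp [qI, qJ] at this
    have hνA : hopfMeas n h4 good_qJ A = 0 := by
      unfold hopfMeas
      rw [Measure.add_apply, Measure.map_apply (measurable_sQ n h4 good_qJ) hAm,
        Measure.map_apply (measurable_sQ n h4 (good_neg good_qJ)) hAm]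
      have e1 : sQ n h4 good_qJ ⁻¹' A = ∅ := by
        apply Set.eq_empty_of_forall_notMem
        intro x hx
        rcases hx with ⟨y, hy⟩ | ⟨y, hy⟩
        · exact hqIJ (sQ_inj h4 good_qI good_qJ hy).2
        · exact hqIJ' (sQ_inj h4 (good_neg good_qI) good_qJ hy).2
      have e2 : sQ n h4 (good_neg good_qJ) ⁻¹' A = ∅ := by
        apply Set.eq_empty_of_forall_notMem
        intro x hx
        rcases hx with ⟨y, hy⟩ | ⟨y, hy⟩
        · have := (sQ_inj h4 good_qI (good_neg good_qJ) hy).2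
          apply hqIJ'
          rw [← neg_neg qI, this]
          simp
        · have := (sQ_inj h4 (good_neg good_qI) (good_neg good_qJ) hy).2
          exact hqIJ (neg_injective this)
      rw [e1, e2]
      simp
    have h1 := congrArg (fun v : ComplexMeasure (UnitTangentSphere n) => v A) hEq
    rw [cm_apply _ hAm, cm_apply _ hAm, hμA, hνA] at h1
    have hne : mUQ Set.univ + mUQ Set.univ ≠ 0 := fun h0 =>
      mUQ_univ_ne_zero (add_eq_zero.1 h0).1
    have hnetop : mUQ Set.univ + mUQ Set.univ ≠ ⊤ := by
      simp [measure_ne_top]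
    have : ((mUQ Set.univ + mUQ Set.univ).toReal : ℂ) ≠ 0 := by
      simp only [ne_eq, Complex.ofReal_eq_zero]
      exact ENNReal.toReal_ne_zero.2 ⟨hne, hnetop⟩
    rw [ENNReal.toReal_zero] at h1
    exact this (by simpa using h1)
  · intro t
    exact cm_map _ _ (measurable_geodesicFlow n t) (map_geodesicFlow_hopf n h4 good_qI t)
  · exact cm_map _ _ (measurable_flipMap n) (map_flip_hopf n h4 good_qI)
  · intro t
    exact cm_map _ _ (measurable_geodesicFlow n t) (map_geodesicFlow_hopf n h4 good_qJ t)
  · exact cm_map _ _ (measurable_flipMap n) (map_flip_hopf n h4 good_qJ)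
  · exact (cm_map _ _ (measurable_sphereProj n) rfl).trans
      ((cm_congr _ _ (map_proj_hopf n h4 good_qI good_qJ)).trans
        (cm_map _ _ (measurable_sphereProj n) rfl).symm)
end
end

section
/- For every natural number j ≥ 2, there exist two distinct probability measures on the unit tangent bundle S(S^{2j}) of the standard round sphere S^{2j} of constant curvature 1, each invariant under the geodesic flow G_t for all t ∈ ℝ and under the flip map σ, whose pushforwards under the canonical projection π : S(S^{2j}) → S^{2j} coincide. In other words, even G_t-invariant probability measures on S(S^{2j}) are not determined by their projection to S^{2j}. -/
open MeasureTheory Real RealInnerProductSpace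

noncomputable section

open scoped ENNReal
open Quaternion


section CompactHaar
variable {G : Type*} [Group G] [TopologicalSpace G] [IsTopologicalGroup G] [CompactSpace G]
  [LocallyCompactSpace G] [MeasurableSpace G] [BorelSpace G]

omit [CompactSpace G] in
lemma haar_univ_ne_zero : (Measure.haar : Measure G) Set.univ ≠ 0 :=
  (isOpen_univ.measure_pos Measure.haar ⟨1, trivial⟩).ne'

lemma haar_univ_ne_top : (Measure.haar : Measure G) Set.univ ≠ ⊤ :=
  (isCompact_univ.measure_lt_top).ne

lemma haar_map_mul_right (g : G) :
    (Measure.haar : Measure G).map (· * g) = Measure.haar := by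
  set ν := (Measure.haar : Measure G).map (· * g) with hν
  have hmg : Measurable (· * g : G → G) := measurable_mul_const g
  have hνuniv : ν Set.univ = (Measure.haar : Measure G) Set.univ := by
    rw [hν, Measure.map_apply hmg MeasurableSet.univ, Set.preimage_univ]
  haveI : IsFiniteMeasure ν := by
    constructor
    rw [hνuniv]
    exact isCompact_univ.measure_lt_top
  haveI : ν.IsMulLeftInvariant := by
    constructor
    intro h
    rw [hν, Measure.map_map (measurable_const_mul h) hmg]
    have heq : ((h * ·) ∘ (· * g)) = ((· * g) ∘ (h * ·)) :=
      funext fun x => (mul_assoc h x g).symm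
    rw [heq, ← Measure.map_map hmg (measurable_const_mul h),
      map_mul_left_eq_self]
  have key := Measure.isMulInvariant_eq_smul_of_compactSpace ν (Measure.haar : Measure G)
  set c := ν.haarScalarFactor (Measure.haar : Measure G) with hc
  have huniv2 : (c : ℝ≥0∞) * (Measure.haar : Measure G) Set.univ
      = (Measure.haar : Measure G) Set.univ := by
    conv_rhs => rw [← hνuniv, key]
    simp only [Measure.smul_apply, ENNReal.smul_def, smul_eq_mul]
  have hc1 : (c : ℝ≥0∞) = 1 := by
    rw [ENNReal.mul_eq_right haar_univ_ne_zero haar_univ_ne_top] at huniv2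
    exact huniv2
  rw [key, ENNReal.smul_def, hc1, one_smul]

/-- The normalized (probability) Haar measure on a compact group. -/
def uniHaar : Measure G := ((Measure.haar : Measure G) Set.univ)⁻¹ • Measure.haar

instance uniHaar_prob : IsProbabilityMeasure (uniHaar : Measure G) := by
  constructor
  rw [uniHaar, Measure.smul_apply, smul_eq_mul]
  exact ENNReal.inv_mul_cancel haar_univ_ne_zero haar_univ_ne_top

instance uniHaar_leftInv : (uniHaar : Measure G).IsMulLeftInvariant := by
  rw [uniHaar]; infer_instance

instance uniHaar_rightInv : (uniHaar : Measure G).IsMulRightInvariant := by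
  constructor
  intro g
  rw [uniHaar, Measure.map_smul, haar_map_mul_right]

end CompactHaar


/-- Extension by zero, as a linear map. -/
def inclFun {m N : ℕ} (x : EuclideanSpace ℝ (Fin m)) : EuclideanSpace ℝ (Fin N) :=
  WithLp.toLp 2 (fun k => if h : (k : ℕ) < m then x ⟨(k : ℕ), h⟩ else 0)

lemma inclFun_norm {m N : ℕ} (h : m ≤ N) (x : EuclideanSpace ℝ (Fin m)) :
    ‖(inclFun x : EuclideanSpace ℝ (Fin N))‖ = ‖x‖ := by
  rw [EuclideanSpace.norm_eq, EuclideanSpace.norm_eq]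
  congr 1
  have key : ∀ k : Fin N, ‖(inclFun x : EuclideanSpace ℝ (Fin N)) k‖ ^ 2
      = (fun n : ℕ => if hn : n < m then ‖x ⟨n, hn⟩‖ ^ 2 else 0) (k : ℕ) := by
    intro k
    simp only [inclFun]
    split_ifs with hk
    · rfl
    · simp
  calc ∑ k : Fin N, ‖(inclFun x : EuclideanSpace ℝ (Fin N)) k‖ ^ 2
      = ∑ k : Fin N, (fun n : ℕ => if hn : n < m then ‖x ⟨n, hn⟩‖ ^ 2 else 0) (k : ℕ) := by
        exact Finset.sum_congr rfl fun k _ => key k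
    _ = ∑ n ∈ Finset.range N, (fun n : ℕ => if hn : n < m then ‖x ⟨n, hn⟩‖ ^ 2 else 0) n := by
        exact Fin.sum_univ_eq_sum_range (fun n : ℕ => if hn : n < m then ‖x ⟨n, hn⟩‖ ^ 2 else 0) N
    _ = ∑ n ∈ Finset.range m, (fun n : ℕ => if hn : n < m then ‖x ⟨n, hn⟩‖ ^ 2 else 0) n := by
        refine (Finset.sum_subset (Finset.range_subset_range.2 h) ?_).symm
        intro k _ hk
        rw [Finset.mem_range] at hk
        simp [hk]
    _ = ∑ k : Fin m, ‖x k‖ ^ 2 := by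
        rw [← Fin.sum_univ_eq_sum_range (fun n : ℕ => if hn : n < m then ‖x ⟨n, hn⟩‖ ^ 2 else 0) m]
        exact Finset.sum_congr rfl fun k _ => by simp [k.isLt]

/-- Extension by zero as a linear isometry. -/
def incl {m N : ℕ} (h : m ≤ N) : EuclideanSpace ℝ (Fin m) →ₗᵢ[ℝ] EuclideanSpace ℝ (Fin N) where
  toFun := inclFun
  map_add' x y := by
    ext k
    show inclFun (x + y) k = inclFun x k + inclFun y k
    simp only [inclFun]
    split_ifs with hk
    · rfl
    · simp
  map_smul' c x := by
    ext k
    show inclFun (c • x) k = c • inclFun x k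
    simp only [inclFun]
    split_ifs with hk
    · rfl
    · simp
  norm_map' x := inclFun_norm h x

/-- Restriction of coordinates, as a plain linear map. -/
def rest {m N : ℕ} (h : m ≤ N) : EuclideanSpace ℝ (Fin N) →ₗ[ℝ] EuclideanSpace ℝ (Fin m) where
  toFun x := WithLp.toLp 2 (fun k => x (Fin.castLE h k))
  map_add' x y := rfl
  map_smul' c x := rfl

lemma rest_incl {m N : ℕ} (h : m ≤ N) (x : EuclideanSpace ℝ (Fin m)) :
    rest h (incl h x) = x := by
  ext k
  show inclFun x (Fin.castLE h k) = x k
  simp only [inclFun, Fin.coe_castLE]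
  rw [dif_pos k.isLt]


namespace SuttonAux

/-- The quaternion `i`. -/
def mi : ℍ[ℝ] := ⟨0, 1, 0, 0⟩

lemma norm_eq_one_of_normSq {q : ℍ[ℝ]} (hq : Quaternion.normSq q = 1) : ‖q‖ = 1 := by
  apply norm_eq_one_of_sq _ (norm_nonneg _)
  rw [sq, ← Quaternion.normSq_eq_norm_mul_self, hq]

lemma normSq_of_norm_one {q : ℍ[ℝ]} (hq : ‖q‖ = 1) : Quaternion.normSq q = 1 := by
  rw [Quaternion.normSq_eq_norm_mul_self, hq, one_mul]

@[simp] lemma mi_re : mi.re = 0 := rfl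
@[simp] lemma mi_imI : mi.imI = 1 := rfl
@[simp] lemma mi_imJ : mi.imJ = 0 := rfl
@[simp] lemma mi_imK : mi.imK = 0 := rfl

lemma norm_mi : ‖mi‖ = 1 := by
  apply norm_eq_one_of_normSq
  simp [Quaternion.normSq_def']

lemma mi_mul_mi : mi * mi = -1 := by
  ext <;> simp

lemma star_mi : star mi = -mi := by
  ext <;> simp

lemma re_mul_comm (a b : ℍ[ℝ]) : (a * b).re = (b * a).re := by
  simp only [Quaternion.re_mul]; ring

lemma re_conj (w p : ℍ[ℝ]) : (w * (p * star w)).re = Quaternion.normSq w * p.re := by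
  rw [re_mul_comm, mul_assoc, Quaternion.star_mul_self]
  simp only [Quaternion.re_mul, Quaternion.re_coe, Quaternion.imI_coe, Quaternion.imJ_coe,
    Quaternion.imK_coe]
  ring

lemma frame1 (w x e : ℍ[ℝ]) (a b : ℝ) :
    a • (w * x) + b • (w * (e * x)) = (w * ((a : ℍ[ℝ]) + (b : ℍ[ℝ]) * e)) * x := by
  rw [← mul_smul_comm, ← mul_smul_comm, ← mul_add, mul_assoc]
  congr 1
  rw [add_mul, mul_assoc, Quaternion.coe_mul_eq_smul, Quaternion.coe_mul_eq_smul]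

lemma mulE (e : ℍ[ℝ]) (he : e * e = -1) (a b : ℝ) :
    ((a : ℍ[ℝ]) + (b : ℍ[ℝ]) * e) * e = ((-b : ℝ) : ℍ[ℝ]) + (a : ℍ[ℝ]) * e := by
  rw [add_mul, mul_assoc, he, Quaternion.coe_neg, mul_neg_one]
  abel

lemma frame2 (w x e : ℍ[ℝ]) (he : e * e = -1) (a b : ℝ) :
    (-b) • (w * x) + a • (w * (e * x)) = (w * ((a : ℍ[ℝ]) + (b : ℍ[ℝ]) * e)) * (e * x) := by
  rw [frame1 w x e (-b) a, mul_assoc, mul_assoc, ← mul_assoc _ e x, mulE e he a b]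

lemma frameR1 (y e : ℍ[ℝ]) (a b : ℝ) :
    a • y + b • (y * e) = y * ((a : ℍ[ℝ]) + (b : ℍ[ℝ]) * e) := by
  rw [mul_add, Quaternion.mul_coe_eq_smul, ← mul_assoc, Quaternion.mul_coe_eq_smul,
    smul_mul_assoc]

lemma frameR2 (y e : ℍ[ℝ]) (he : e * e = -1) (a b : ℝ) :
    (-b) • y + a • (y * e) = (y * ((a : ℍ[ℝ]) + (b : ℍ[ℝ]) * e)) * e := by
  rw [frameR1 y e (-b) a, mul_assoc, mulE e he a b]

end SuttonAux

namespace SuttonAux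

noncomputable instance : MeasurableSpace ℍ[ℝ] := borel _
instance : BorelSpace ℍ[ℝ] := ⟨rfl⟩

/-- The unit quaternions. -/
abbrev S3 : Type := Metric.sphere (0 : ℍ[ℝ]) 1
/-- The unit complex numbers. -/
abbrev SC : Type := Metric.sphere (0 : ℂ) 1

lemma normSq_coeComplex (z : ℂ) :
    Quaternion.normSq (Quaternion.coeComplex z) = Complex.normSq z := by
  rw [Quaternion.normSq_def', Complex.normSq_apply]
  simp [Quaternion.coeComplex]
  ring

lemma norm_coeComplex {z : ℂ} (hz : ‖z‖ = 1) : ‖Quaternion.coeComplex z‖ = 1 := by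
  apply norm_eq_one_of_normSq
  rw [normSq_coeComplex, ← Complex.sq_norm, hz, one_pow]

/-- Embedding of the unit complex numbers into the unit quaternions. -/
def uC (z : SC) : S3 :=
  ⟨Quaternion.coeComplex (z : ℂ), by
    rw [mem_sphere_zero_iff_norm]
    exact norm_coeComplex (mem_sphere_zero_iff_norm.mp z.2)⟩

@[simp] lemma uC_coe (z : SC) : ((uC z : S3) : ℍ[ℝ]) = Quaternion.coeComplex (z : ℂ) := rfl

lemma continuous_coeComplex : Continuous Quaternion.coeComplex := by
  have : Quaternion.coeComplex = ⇑Quaternion.ofComplex.toLinearMap := by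
    funext z; rfl
  rw [this]
  exact Quaternion.ofComplex.toLinearMap.continuous_of_finiteDimensional

lemma continuous_uC : Continuous uC :=
  Continuous.subtype_mk (continuous_coeComplex.comp continuous_subtype_val) _

/-- The standard circle element `e^{it}`. -/
def eC (t : ℝ) : SC :=
  ⟨Complex.exp (t * Complex.I), by
    rw [mem_sphere_zero_iff_norm, Complex.norm_exp_ofReal_mul_I]⟩

lemma add_mul_mi (a b : ℝ) : (a : ℍ[ℝ]) + (b : ℍ[ℝ]) * mi = ⟨a, b, 0, 0⟩ := by
  ext <;> simp [Quaternion.re_mul, Quaternion.imI_mul, Quaternion.imJ_mul, Quaternion.imK_mul]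

lemma coeComplex_eC (t : ℝ) :
    Quaternion.coeComplex ((eC t : SC) : ℂ)
      = (Real.cos t : ℍ[ℝ]) + (Real.sin t : ℍ[ℝ]) * mi := by
  rw [add_mul_mi]
  ext <;> simp [Quaternion.coeComplex, eC]

lemma coeComplex_eC_neg (t : ℝ) :
    Quaternion.coeComplex ((eC (-t) : SC) : ℂ)
      = (Real.cos t : ℍ[ℝ]) + (Real.sin t : ℍ[ℝ]) * (-mi) := by
  have : (Real.sin t : ℍ[ℝ]) * (-mi) = (Real.sin (-t) : ℍ[ℝ]) * mi := by
    rw [Real.sin_neg, Quaternion.coe_neg, neg_mul, ← mul_neg]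
  rw [this, ← Real.cos_neg t, coeComplex_eC]

lemma coeComplex_mul_mi (z : ℂ) :
    Quaternion.coeComplex z * mi = mi * Quaternion.coeComplex z := by
  ext <;> simp [Quaternion.re_mul, Quaternion.imI_mul, Quaternion.imJ_mul, Quaternion.imK_mul]

end SuttonAux

namespace SuttonAux

variable {n : ℕ}

/-- Isometric embedding of the quaternions into `Euc n` (for `n + 1 ≥ 4`). -/
def iota (h4 : 4 ≤ n + 1) : ℍ[ℝ] →ₗᵢ[ℝ] Euc n :=
  (incl h4).comp Quaternion.linearIsometryEquivTuple.toLinearIsometry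

/-- Left inverse of `iota`. -/
def pi4 (h4 : 4 ≤ n + 1) : Euc n →ₗ[ℝ] ℍ[ℝ] :=
  (Quaternion.linearIsometryEquivTuple.symm.toLinearEquiv.toLinearMap).comp (rest h4)

lemma pi4_iota (h4 : 4 ≤ n + 1) (q : ℍ[ℝ]) : pi4 h4 (iota h4 q) = q := by
  simp only [pi4, iota, LinearMap.comp_apply, LinearIsometry.coe_comp, Function.comp_apply,
    LinearIsometryEquiv.coe_toLinearIsometry]
  rw [rest_incl]
  exact Quaternion.linearIsometryEquivTuple.symm_apply_apply q

@[simp] lemma norm_iota (h4 : 4 ≤ n + 1) (q : ℍ[ℝ]) : ‖iota h4 q‖ = ‖q‖ :=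
  (iota h4).norm_map q

/-- The embedding of the unit quaternions into the sphere `Sⁿ`. -/
def cS (h4 : 4 ≤ n + 1) (x : S3) : Metric.sphere (0 : Euc n) 1 :=
  ⟨iota h4 (x : ℍ[ℝ]), by
    rw [mem_sphere_zero_iff_norm, norm_iota]
    exact mem_sphere_zero_iff_norm.mp x.2⟩

lemma continuous_cS (h4 : 4 ≤ n + 1) : Continuous (cS h4) :=
  Continuous.subtype_mk ((iota h4).continuous.comp continuous_subtype_val) _

lemma pair_mem (h4 : 4 ≤ n + 1) {u v : ℍ[ℝ]} (hu : ‖u‖ = 1) (hv : ‖v‖ = 1)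
    (huv : (u * star v).re = 0) :
    ((iota h4 u, iota h4 v) : Euc n × Euc n) ∈ UnitTangentSphere n := by
  refine ⟨by rw [norm_iota]; exact hu, by rw [norm_iota]; exact hv, ?_⟩
  rw [(iota h4).inner_map_map, Quaternion.inner_def]
  exact huv

lemma reL (w x e : ℍ[ℝ]) (hx : Quaternion.normSq x = 1) (hre : e.re = 0) :
    ((w * x) * star (w * (e * x))).re = 0 := by
  have h1 : (w * x) * star (w * (e * x)) = w * ((star e) * star w) := by
    rw [star_mul, star_mul, mul_assoc]
    congr 1
    rw [← mul_assoc, ← mul_assoc, Quaternion.self_mul_star, hx]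
    norm_num
  rw [h1, re_conj]
  simp [hre]

lemma reR (y e : ℍ[ℝ]) (hre : e.re = 0) : (y * star (y * e)).re = 0 := by
  rw [star_mul, re_conj]
  simp [hre]

/-- The "left" frame map. -/
def PsiL (h4 : 4 ≤ n + 1) (e : ℍ[ℝ]) (he : ‖e‖ = 1) (hre : e.re = 0)
    (p : S3 × SC) : (UnitTangentSphere n : Set (Euc n × Euc n)) :=
  ⟨(iota h4 (Quaternion.coeComplex (p.2 : ℂ) * (p.1 : ℍ[ℝ])),
    iota h4 (Quaternion.coeComplex (p.2 : ℂ) * (e * (p.1 : ℍ[ℝ])))),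
   by
    have hx : ‖(p.1 : ℍ[ℝ])‖ = 1 := mem_sphere_zero_iff_norm.mp p.1.2
    have hw : ‖Quaternion.coeComplex (p.2 : ℂ)‖ = 1 :=
      norm_coeComplex (mem_sphere_zero_iff_norm.mp p.2.2)
    exact pair_mem h4 (by rw [norm_mul, hx, hw, one_mul])
      (by rw [norm_mul, norm_mul, hx, hw, he]; norm_num)
      (reL _ _ _ (normSq_of_norm_one hx) hre)⟩

/-- The "right" frame map. -/
def PsiR (h4 : 4 ≤ n + 1) (e : ℍ[ℝ]) (he : ‖e‖ = 1) (hre : e.re = 0)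
    (p : S3 × SC) : (UnitTangentSphere n : Set (Euc n × Euc n)) :=
  ⟨(iota h4 ((p.1 : ℍ[ℝ]) * Quaternion.coeComplex (p.2 : ℂ)),
    iota h4 (((p.1 : ℍ[ℝ]) * Quaternion.coeComplex (p.2 : ℂ)) * e)),
   by
    have hx : ‖(p.1 : ℍ[ℝ])‖ = 1 := mem_sphere_zero_iff_norm.mp p.1.2
    have hw : ‖Quaternion.coeComplex (p.2 : ℂ)‖ = 1 :=
      norm_coeComplex (mem_sphere_zero_iff_norm.mp p.2.2)
    exact pair_mem h4 (by rw [norm_mul, hx, hw, one_mul])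
      (by rw [norm_mul, norm_mul, hx, hw, he]; norm_num)
      (reR _ _ hre)⟩

lemma continuous_PsiL (h4 : 4 ≤ n + 1) (e : ℍ[ℝ]) (he : ‖e‖ = 1) (hre : e.re = 0) :
    Continuous (PsiL h4 e he hre) := by
  apply Continuous.subtype_mk
  have hw : Continuous fun p : S3 × SC => Quaternion.coeComplex (p.2 : ℂ) :=
    continuous_coeComplex.comp (continuous_subtype_val.comp continuous_snd)
  have hx : Continuous fun p : S3 × SC => (p.1 : ℍ[ℝ]) :=
    continuous_subtype_val.comp continuous_fst
  exact Continuous.prodMk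
    ((iota h4).continuous.comp (hw.mul hx))
    ((iota h4).continuous.comp (hw.mul (continuous_const.mul hx)))

lemma continuous_PsiR (h4 : 4 ≤ n + 1) (e : ℍ[ℝ]) (he : ‖e‖ = 1) (hre : e.re = 0) :
    Continuous (PsiR h4 e he hre) := by
  apply Continuous.subtype_mk
  have hw : Continuous fun p : S3 × SC => Quaternion.coeComplex (p.2 : ℂ) :=
    continuous_coeComplex.comp (continuous_subtype_val.comp continuous_snd)
  have hx : Continuous fun p : S3 × SC => (p.1 : ℍ[ℝ]) :=
    continuous_subtype_val.comp continuous_fst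
  exact Continuous.prodMk
    ((iota h4).continuous.comp (hx.mul hw))
    ((iota h4).continuous.comp ((hx.mul hw).mul continuous_const))

end SuttonAux

namespace SuttonAux

variable {n : ℕ}

lemma flow_PsiL (h4 : 4 ≤ n + 1) (e : ℍ[ℝ]) (he : ‖e‖ = 1) (hre : e.re = 0)
    (hee : e * e = -1) (t : ℝ) (z' : SC)
    (hz' : Quaternion.coeComplex ((z' : ℂ))
      = (Real.cos t : ℍ[ℝ]) + (Real.sin t : ℍ[ℝ]) * e)
    (p : S3 × SC) :
    geodesicFlow n t (PsiL h4 e he hre p) = PsiL h4 e he hre (p.1, p.2 * z') := by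
  apply Subtype.ext
  refine Prod.ext ?_ ?_
  · show Real.cos t • iota h4 (Quaternion.coeComplex (p.2 : ℂ) * (p.1 : ℍ[ℝ]))
        + Real.sin t • iota h4 (Quaternion.coeComplex (p.2 : ℂ) * (e * (p.1 : ℍ[ℝ])))
      = iota h4 (Quaternion.coeComplex ((p.2 * z' : SC) : ℂ) * (p.1 : ℍ[ℝ]))
    rw [← _root_.map_smul, ← _root_.map_smul, ← _root_.map_add, frame1, Metric.unitSphere.coe_mul,
      Quaternion.coeComplex_mul, hz']
  · show (-Real.sin t) • iota h4 (Quaternion.coeComplex (p.2 : ℂ) * (p.1 : ℍ[ℝ]))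
        + Real.cos t • iota h4 (Quaternion.coeComplex (p.2 : ℂ) * (e * (p.1 : ℍ[ℝ])))
      = iota h4 (Quaternion.coeComplex ((p.2 * z' : SC) : ℂ) * (e * (p.1 : ℍ[ℝ])))
    rw [← _root_.map_smul, ← _root_.map_smul, ← _root_.map_add, frame2 _ _ _ hee, Metric.unitSphere.coe_mul,
      Quaternion.coeComplex_mul, hz']

lemma flow_PsiR (h4 : 4 ≤ n + 1) (e : ℍ[ℝ]) (he : ‖e‖ = 1) (hre : e.re = 0)
    (hee : e * e = -1) (t : ℝ) (z' : SC)
    (hz' : Quaternion.coeComplex ((z' : ℂ))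
      = (Real.cos t : ℍ[ℝ]) + (Real.sin t : ℍ[ℝ]) * e)
    (p : S3 × SC) :
    geodesicFlow n t (PsiR h4 e he hre p) = PsiR h4 e he hre (p.1, p.2 * z') := by
  apply Subtype.ext
  refine Prod.ext ?_ ?_
  · show Real.cos t • iota h4 ((p.1 : ℍ[ℝ]) * Quaternion.coeComplex (p.2 : ℂ))
        + Real.sin t • iota h4 (((p.1 : ℍ[ℝ]) * Quaternion.coeComplex (p.2 : ℂ)) * e)
      = iota h4 ((p.1 : ℍ[ℝ]) * Quaternion.coeComplex ((p.2 * z' : SC) : ℂ))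
    rw [← _root_.map_smul, ← _root_.map_smul, ← _root_.map_add, frameR1, Metric.unitSphere.coe_mul,
      Quaternion.coeComplex_mul, hz', mul_assoc]
  · show (-Real.sin t) • iota h4 ((p.1 : ℍ[ℝ]) * Quaternion.coeComplex (p.2 : ℂ))
        + Real.cos t • iota h4 (((p.1 : ℍ[ℝ]) * Quaternion.coeComplex (p.2 : ℂ)) * e)
      = iota h4 (((p.1 : ℍ[ℝ]) * Quaternion.coeComplex ((p.2 * z' : SC) : ℂ)) * e)
    rw [← _root_.map_smul, ← _root_.map_smul, ← _root_.map_add, frameR2 _ _ hee, Metric.unitSphere.coe_mul,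
      Quaternion.coeComplex_mul, hz', mul_assoc ((p.1 : ℍ[ℝ]))]

lemma flip_PsiL (h4 : 4 ≤ n + 1) (e e' : ℍ[ℝ]) (he : ‖e‖ = 1) (hre : e.re = 0)
    (he' : ‖e'‖ = 1) (hre' : e'.re = 0) (hne : e' = -e) (p : S3 × SC) :
    flipMap n (PsiL h4 e he hre p) = PsiL h4 e' he' hre' p := by
  apply Subtype.ext
  refine Prod.ext rfl ?_
  show -(iota h4 (Quaternion.coeComplex (p.2 : ℂ) * (e * (p.1 : ℍ[ℝ]))))
      = iota h4 (Quaternion.coeComplex (p.2 : ℂ) * (e' * (p.1 : ℍ[ℝ])))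
  rw [hne, neg_mul, mul_neg, map_neg]

lemma flip_PsiR (h4 : 4 ≤ n + 1) (e e' : ℍ[ℝ]) (he : ‖e‖ = 1) (hre : e.re = 0)
    (he' : ‖e'‖ = 1) (hre' : e'.re = 0) (hne : e' = -e) (p : S3 × SC) :
    flipMap n (PsiR h4 e he hre p) = PsiR h4 e' he' hre' p := by
  apply Subtype.ext
  refine Prod.ext rfl ?_
  show -(iota h4 (((p.1 : ℍ[ℝ]) * Quaternion.coeComplex (p.2 : ℂ)) * e))
      = iota h4 (((p.1 : ℍ[ℝ]) * Quaternion.coeComplex (p.2 : ℂ)) * e')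
  rw [hne, mul_neg, map_neg]

lemma proj_PsiL (h4 : 4 ≤ n + 1) (e : ℍ[ℝ]) (he : ‖e‖ = 1) (hre : e.re = 0) (p : S3 × SC) :
    sphereProj n (PsiL h4 e he hre p) = cS h4 (uC p.2 * p.1) := by
  apply Subtype.ext
  show iota h4 (Quaternion.coeComplex (p.2 : ℂ) * (p.1 : ℍ[ℝ]))
      = iota h4 ((uC p.2 * p.1 : S3) : ℍ[ℝ])
  rw [Metric.unitSphere.coe_mul, uC_coe]

lemma proj_PsiR (h4 : 4 ≤ n + 1) (e : ℍ[ℝ]) (he : ‖e‖ = 1) (hre : e.re = 0) (p : S3 × SC) :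
    sphereProj n (PsiR h4 e he hre p) = cS h4 (p.1 * uC p.2) := by
  apply Subtype.ext
  show iota h4 ((p.1 : ℍ[ℝ]) * Quaternion.coeComplex (p.2 : ℂ))
      = iota h4 ((p.1 * uC p.2 : S3) : ℍ[ℝ])
  rw [Metric.unitSphere.coe_mul, uC_coe]

end SuttonAux

namespace SuttonAux

variable {n : ℕ}

lemma continuous_geodesicFlow (t : ℝ) :
    Continuous (geodesicFlow n t) := by
  apply Continuous.subtype_mk
  have h1 : Continuous fun p : (UnitTangentSphere n : Set (Euc n × Euc n)) =>
      ((p : Euc n × Euc n)).1 := continuous_fst.comp continuous_subtype_val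
  have h2 : Continuous fun p : (UnitTangentSphere n : Set (Euc n × Euc n)) =>
      ((p : Euc n × Euc n)).2 := continuous_snd.comp continuous_subtype_val
  exact ((h1.const_smul (Real.cos t)).add (h2.const_smul (Real.sin t))).prodMk
    ((h1.const_smul (-Real.sin t)).add (h2.const_smul (Real.cos t)))

lemma continuous_flipMap : Continuous (flipMap n) := by
  apply Continuous.subtype_mk
  have h1 : Continuous fun p : (UnitTangentSphere n : Set (Euc n × Euc n)) =>
      ((p : Euc n × Euc n)).1 := continuous_fst.comp continuous_subtype_val
  have h2 : Continuous fun p : (UnitTangentSphere n : Set (Euc n × Euc n)) =>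
      ((p : Euc n × Euc n)).2 := continuous_snd.comp continuous_subtype_val
  exact h1.prodMk h2.neg

lemma continuous_sphereProj : Continuous (sphereProj n) := by
  apply Continuous.subtype_mk
  exact continuous_fst.comp continuous_subtype_val

/-- Normalized Haar measure on the unit quaternions. -/
def muS3 : Measure S3 := uniHaar
/-- Normalized Haar measure on the unit complex numbers. -/
def muSC : Measure SC := uniHaar

instance : IsProbabilityMeasure muS3 := uniHaar_prob
instance : IsProbabilityMeasure muSC := uniHaar_prob
instance : muS3.IsMulLeftInvariant := uniHaar_leftInv
instance : muS3.IsMulRightInvariant := uniHaar_rightInv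
instance : muSC.IsMulLeftInvariant := uniHaar_leftInv
instance : muSC.IsMulRightInvariant := uniHaar_rightInv

/-- The base measure on `S³ × S¹`. -/
def mBase : Measure (S3 × SC) := muS3.prod muSC

instance : IsProbabilityMeasure mBase := by
  rw [mBase]; infer_instance

lemma mBase_map_translate (z' : SC) :
    mBase.map (fun p : S3 × SC => (p.1, p.2 * z')) = mBase := by
  have heq : (fun p : S3 × SC => (p.1, p.2 * z')) = Prod.map id (· * z') :=
    funext fun p => rfl
  rw [heq, mBase]
  exact ((MeasurePreserving.id muS3).prod (measurePreserving_mul_right muSC z')).map_eq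

lemma map_mul_into_left {f : SC → S3} (hf : Continuous f) :
    mBase.map (fun p : S3 × SC => f p.2 * p.1) = muS3 := by
  have hmeas : Measurable fun p : S3 × SC => f p.2 * p.1 :=
    ((hf.comp continuous_snd).mul continuous_fst).measurable
  ext s hs
  rw [Measure.map_apply hmeas hs, mBase, ← Measure.prod_swap,
    Measure.map_apply measurable_swap (hmeas hs)]
  have hswap : Prod.swap ⁻¹' ((fun p : S3 × SC => f p.2 * p.1) ⁻¹' s)
      = (fun p : SC × S3 => f p.1 * p.2) ⁻¹' s := rfl
  have hm2 : Measurable (fun p : SC × S3 => f p.1 * p.2) :=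
    ((hf.comp continuous_fst).mul continuous_snd).measurable
  rw [hswap, Measure.prod_apply (hm2 hs)]
  have hslice : ∀ z : SC, muS3 (Prod.mk z ⁻¹' ((fun p : SC × S3 => f p.1 * p.2) ⁻¹' s))
      = muS3 s := by
    intro z
    have : (Prod.mk z ⁻¹' ((fun p : SC × S3 => f p.1 * p.2) ⁻¹' s))
        = (fun x : S3 => f z * x) ⁻¹' s := rfl
    rw [this, ← Measure.map_apply (measurable_const_mul (f z)) hs, map_mul_left_eq_self]
  rw [MeasureTheory.lintegral_congr hslice, MeasureTheory.lintegral_const, measure_univ, mul_one]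

lemma map_mul_into_right {f : SC → S3} (hf : Continuous f) :
    mBase.map (fun p : S3 × SC => p.1 * f p.2) = muS3 := by
  have hmeas : Measurable fun p : S3 × SC => p.1 * f p.2 :=
    (continuous_fst.mul (hf.comp continuous_snd)).measurable
  ext s hs
  rw [Measure.map_apply hmeas hs, mBase, ← Measure.prod_swap,
    Measure.map_apply measurable_swap (hmeas hs)]
  have hswap : Prod.swap ⁻¹' ((fun p : S3 × SC => p.1 * f p.2) ⁻¹' s)
      = (fun p : SC × S3 => p.2 * f p.1) ⁻¹' s := rfl
  have hm2 : Measurable (fun p : SC × S3 => p.2 * f p.1) :=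
    (continuous_snd.mul (hf.comp continuous_fst)).measurable
  rw [hswap, Measure.prod_apply (hm2 hs)]
  have hslice : ∀ z : SC, muS3 (Prod.mk z ⁻¹' ((fun p : SC × S3 => p.2 * f p.1) ⁻¹' s))
      = muS3 s := by
    intro z
    have : (Prod.mk z ⁻¹' ((fun p : SC × S3 => p.2 * f p.1) ⁻¹' s))
        = (fun x : S3 => x * f z) ⁻¹' s := rfl
    rw [this, ← Measure.map_apply (measurable_mul_const (f z)) hs, map_mul_right_eq_self]
  rw [MeasureTheory.lintegral_congr hslice, MeasureTheory.lintegral_const, measure_univ, mul_one]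

lemma norm_nmi : ‖-mi‖ = 1 := by rw [norm_neg]; exact norm_mi
lemma nmi_re : (-mi).re = 0 := by simp
lemma nmi_mul_nmi : -mi * -mi = -1 := by rw [neg_mul_neg, mi_mul_mi]

/-- The four frame maps with `e = ±i`, on the left or on the right. -/
def PsiLp (h4 : 4 ≤ n + 1) := PsiL h4 mi norm_mi mi_re
def PsiLm (h4 : 4 ≤ n + 1) := PsiL h4 (-mi) norm_nmi nmi_re
def PsiRp (h4 : 4 ≤ n + 1) := PsiR h4 mi norm_mi mi_re
def PsiRm (h4 : 4 ≤ n + 1) := PsiR h4 (-mi) norm_nmi nmi_re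

/-- The first invariant measure: uniform measure over left-Hopf great circles. -/
def nu1 (h4 : 4 ≤ n + 1) : Measure (UnitTangentSphere n : Set (Euc n × Euc n)) :=
  (2⁻¹ : ℝ≥0∞) • mBase.map (PsiLp h4) + (2⁻¹ : ℝ≥0∞) • mBase.map (PsiLm h4)

/-- The second invariant measure: uniform measure over right-Hopf great circles. -/
def nu2 (h4 : 4 ≤ n + 1) : Measure (UnitTangentSphere n : Set (Euc n × Euc n)) :=
  (2⁻¹ : ℝ≥0∞) • mBase.map (PsiRp h4) + (2⁻¹ : ℝ≥0∞) • mBase.map (PsiRm h4)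

end SuttonAux

namespace SuttonAux

variable {n : ℕ}

lemma measurable_translate (z' : SC) :
    Measurable (fun p : S3 × SC => (p.1, p.2 * z')) :=
  (continuous_fst.prodMk (continuous_snd.mul continuous_const)).measurable

lemma map_flow (t : ℝ) (Psi : S3 × SC → (UnitTangentSphere n : Set (Euc n × Euc n)))
    (hc : Continuous Psi) (z' : SC)
    (hpt : ∀ p, geodesicFlow n t (Psi p) = Psi (p.1, p.2 * z')) :
    (mBase.map Psi).map (geodesicFlow n t) = mBase.map Psi := by
  rw [Measure.map_map (continuous_geodesicFlow t).measurable hc.measurable]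
  have heq : (geodesicFlow n t ∘ Psi) = Psi ∘ (fun p : S3 × SC => (p.1, p.2 * z')) :=
    funext hpt
  rw [heq, ← Measure.map_map hc.measurable (measurable_translate z'), mBase_map_translate]

lemma map_flip (Psi Psi' : S3 × SC → (UnitTangentSphere n : Set (Euc n × Euc n)))
    (hc : Continuous Psi) (hpt : ∀ p, flipMap n (Psi p) = Psi' p) :
    (mBase.map Psi).map (flipMap n) = mBase.map Psi' := by
  rw [Measure.map_map continuous_flipMap.measurable hc.measurable]
  have heq : (flipMap n ∘ Psi) = Psi' := funext hpt
  rw [heq]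

lemma map_proj (h4 : 4 ≤ n + 1) (Psi : S3 × SC → (UnitTangentSphere n : Set (Euc n × Euc n)))
    (hc : Continuous Psi) (g : S3 × SC → S3) (hg : Continuous g)
    (hpt : ∀ p, sphereProj n (Psi p) = cS h4 (g p)) (hmap : mBase.map g = muS3) :
    (mBase.map Psi).map (sphereProj n) = muS3.map (cS h4) := by
  rw [Measure.map_map continuous_sphereProj.measurable hc.measurable]
  have heq : (sphereProj n ∘ Psi) = (cS h4) ∘ g := funext hpt
  rw [heq, ← Measure.map_map (continuous_cS h4).measurable hg.measurable, hmap]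

lemma nu1_flow (h4 : 4 ≤ n + 1) (t : ℝ) :
    (nu1 h4).map (geodesicFlow n t) = nu1 h4 := by
  rw [nu1, Measure.map_add _ _ (continuous_geodesicFlow t).measurable,
    Measure.map_smul, Measure.map_smul,
    map_flow t (PsiLp h4) (continuous_PsiL h4 _ _ _) (eC t)
      (flow_PsiL h4 mi norm_mi mi_re mi_mul_mi t (eC t) (coeComplex_eC t)),
    map_flow t (PsiLm h4) (continuous_PsiL h4 _ _ _) (eC (-t))
      (flow_PsiL h4 (-mi) norm_nmi nmi_re nmi_mul_nmi t (eC (-t)) (coeComplex_eC_neg t))]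

lemma nu2_flow (h4 : 4 ≤ n + 1) (t : ℝ) :
    (nu2 h4).map (geodesicFlow n t) = nu2 h4 := by
  rw [nu2, Measure.map_add _ _ (continuous_geodesicFlow t).measurable,
    Measure.map_smul, Measure.map_smul,
    map_flow t (PsiRp h4) (continuous_PsiR h4 _ _ _) (eC t)
      (flow_PsiR h4 mi norm_mi mi_re mi_mul_mi t (eC t) (coeComplex_eC t)),
    map_flow t (PsiRm h4) (continuous_PsiR h4 _ _ _) (eC (-t))
      (flow_PsiR h4 (-mi) norm_nmi nmi_re nmi_mul_nmi t (eC (-t)) (coeComplex_eC_neg t))]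

lemma nu1_flip (h4 : 4 ≤ n + 1) : (nu1 h4).map (flipMap n) = nu1 h4 := by
  rw [nu1, Measure.map_add _ _ continuous_flipMap.measurable,
    Measure.map_smul, Measure.map_smul,
    map_flip (PsiLp h4) (PsiLm h4) (continuous_PsiL h4 _ _ _)
      (flip_PsiL h4 mi (-mi) norm_mi mi_re norm_nmi nmi_re rfl),
    map_flip (PsiLm h4) (PsiLp h4) (continuous_PsiL h4 _ _ _)
      (flip_PsiL h4 (-mi) mi norm_nmi nmi_re norm_mi mi_re (neg_neg mi).symm)]
  exact add_comm _ _

lemma nu2_flip (h4 : 4 ≤ n + 1) : (nu2 h4).map (flipMap n) = nu2 h4 := by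
  rw [nu2, Measure.map_add _ _ continuous_flipMap.measurable,
    Measure.map_smul, Measure.map_smul,
    map_flip (PsiRp h4) (PsiRm h4) (continuous_PsiR h4 _ _ _)
      (flip_PsiR h4 mi (-mi) norm_mi mi_re norm_nmi nmi_re rfl),
    map_flip (PsiRm h4) (PsiRp h4) (continuous_PsiR h4 _ _ _)
      (flip_PsiR h4 (-mi) mi norm_nmi nmi_re norm_mi mi_re (neg_neg mi).symm)]
  exact add_comm _ _

lemma nu1_proj (h4 : 4 ≤ n + 1) :
    (nu1 h4).map (sphereProj n) = muS3.map (cS h4) := by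
  rw [nu1, Measure.map_add _ _ continuous_sphereProj.measurable,
    Measure.map_smul, Measure.map_smul,
    map_proj h4 (PsiLp h4) (continuous_PsiL h4 _ _ _) (fun p => uC p.2 * p.1)
      ((continuous_uC.comp continuous_snd).mul continuous_fst)
      (proj_PsiL h4 mi norm_mi mi_re) (map_mul_into_left continuous_uC),
    map_proj h4 (PsiLm h4) (continuous_PsiL h4 _ _ _) (fun p => uC p.2 * p.1)
      ((continuous_uC.comp continuous_snd).mul continuous_fst)
      (proj_PsiL h4 (-mi) norm_nmi nmi_re) (map_mul_into_left continuous_uC),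
    ← add_smul, ENNReal.inv_two_add_inv_two, one_smul]

lemma nu2_proj (h4 : 4 ≤ n + 1) :
    (nu2 h4).map (sphereProj n) = muS3.map (cS h4) := by
  rw [nu2, Measure.map_add _ _ continuous_sphereProj.measurable,
    Measure.map_smul, Measure.map_smul,
    map_proj h4 (PsiRp h4) (continuous_PsiR h4 _ _ _) (fun p => p.1 * uC p.2)
      (continuous_fst.mul (continuous_uC.comp continuous_snd))
      (proj_PsiR h4 mi norm_mi mi_re) (map_mul_into_right continuous_uC),
    map_proj h4 (PsiRm h4) (continuous_PsiR h4 _ _ _) (fun p => p.1 * uC p.2)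
      (continuous_fst.mul (continuous_uC.comp continuous_snd))
      (proj_PsiR h4 (-mi) norm_nmi nmi_re) (map_mul_into_right continuous_uC),
    ← add_smul, ENNReal.inv_two_add_inv_two, one_smul]

instance nu1_prob (h4 : 4 ≤ n + 1) : IsProbabilityMeasure (nu1 h4) := by
  have h1 : IsProbabilityMeasure (mBase.map (PsiLp h4)) :=
    Measure.isProbabilityMeasure_map (continuous_PsiL h4 _ _ _).measurable.aemeasurable
  have h2 : IsProbabilityMeasure (mBase.map (PsiLm h4)) :=
    Measure.isProbabilityMeasure_map (continuous_PsiL h4 _ _ _).measurable.aemeasurable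
  constructor
  rw [nu1, Measure.add_apply, Measure.smul_apply, Measure.smul_apply,
    h1.measure_univ, h2.measure_univ]
  rw [smul_eq_mul, mul_one, ← two_mul, ENNReal.mul_inv_cancel] <;> norm_num

instance nu2_prob (h4 : 4 ≤ n + 1) : IsProbabilityMeasure (nu2 h4) := by
  have h1 : IsProbabilityMeasure (mBase.map (PsiRp h4)) :=
    Measure.isProbabilityMeasure_map (continuous_PsiR h4 _ _ _).measurable.aemeasurable
  have h2 : IsProbabilityMeasure (mBase.map (PsiRm h4)) :=
    Measure.isProbabilityMeasure_map (continuous_PsiR h4 _ _ _).measurable.aemeasurable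
  constructor
  rw [nu2, Measure.add_apply, Measure.smul_apply, Measure.smul_apply,
    h1.measure_univ, h2.measure_univ]
  rw [smul_eq_mul, mul_one, ← two_mul, ENNReal.mul_inv_cancel] <;> norm_num

end SuttonAux

namespace SuttonAux

variable {n : ℕ}

lemma comm_mi {y : ℍ[ℝ]} (h : y * mi = mi * y) : y.imJ = 0 ∧ y.imK = 0 := by
  have hJ := congrArg QuaternionAlgebra.imJ h
  have hK := congrArg QuaternionAlgebra.imK h
  simp [Quaternion.imJ_mul, Quaternion.imK_mul] at hJ hK
  constructor <;> linarith

lemma anti_mi {y : ℍ[ℝ]} (h : y * mi = -(mi * y)) : y.re = 0 ∧ y.imI = 0 := by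
  have hr := congrArg QuaternionAlgebra.re h
  have hI := congrArg QuaternionAlgebra.imI h
  simp [Quaternion.re_mul, Quaternion.imI_mul] at hr hI
  constructor <;> linarith

/-- The unit quaternion `j`. -/
def qj : S3 :=
  ⟨⟨0, 0, 1, 0⟩, by
    apply mem_sphere_zero_iff_norm.mpr
    apply norm_eq_one_of_normSq
    erw [Quaternion.normSq_def']; simp⟩

/-- The unit quaternion `cos θ + sin θ · j`. -/
def wq (θ : ℝ) : S3 :=
  ⟨⟨Real.cos θ, 0, Real.sin θ, 0⟩, by
    apply mem_sphere_zero_iff_norm.mpr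
    apply norm_eq_one_of_normSq
    erw [Quaternion.normSq_def']
    norm_num [Real.cos_sq_add_sin_sq]⟩

/-- The complex-commuting locus: quaternions in `span(1,i)`. -/
def Z1 : Set S3 := {x | (x : ℍ[ℝ]).imJ = 0 ∧ (x : ℍ[ℝ]).imK = 0}
/-- The complex-anticommuting locus: quaternions in `span(j,k)`. -/
def Z2 : Set S3 := {x | (x : ℍ[ℝ]).re = 0 ∧ (x : ℍ[ℝ]).imI = 0}
/-- The union of the two loci. -/
def Zball : Set S3 := Z1 ∪ Z2

lemma isClosed_Z1 : IsClosed Z1 :=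
  ((isClosed_eq (Quaternion.continuous_imJ.comp continuous_subtype_val) continuous_const).inter
    (isClosed_eq (Quaternion.continuous_imK.comp continuous_subtype_val) continuous_const))

lemma isClosed_Z2 : IsClosed Z2 :=
  ((isClosed_eq (Quaternion.continuous_re.comp continuous_subtype_val) continuous_const).inter
    (isClosed_eq (Quaternion.continuous_imI.comp continuous_subtype_val) continuous_const))

lemma measurableSet_Zball : MeasurableSet Zball :=
  (isClosed_Z1.union isClosed_Z2).measurableSet

lemma memA_invariant (θ : ℝ) (x : S3) (hx : x * wq θ ∈ Z1) :
    (x : ℍ[ℝ]).re ^ 2 + (x : ℍ[ℝ]).imI ^ 2 = Real.cos θ ^ 2 := by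
  obtain ⟨hJ, hK⟩ := hx
  rw [Metric.unitSphere.coe_mul] at hJ hK
  have hb1 : ((wq θ : S3) : ℍ[ℝ]).re = Real.cos θ := rfl
  have hb2 : ((wq θ : S3) : ℍ[ℝ]).imI = 0 := rfl
  have hb3 : ((wq θ : S3) : ℍ[ℝ]).imJ = Real.sin θ := rfl
  have hb4 : ((wq θ : S3) : ℍ[ℝ]).imK = 0 := rfl
  rw [Quaternion.imJ_mul, hb1, hb2, hb3, hb4] at hJ
  rw [Quaternion.imK_mul, hb1, hb2, hb3, hb4] at hK
  have hnorm : (x : ℍ[ℝ]).re ^ 2 + (x : ℍ[ℝ]).imI ^ 2 + (x : ℍ[ℝ]).imJ ^ 2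
      + (x : ℍ[ℝ]).imK ^ 2 = 1 := by
    rw [← Quaternion.normSq_def']
    exact normSq_of_norm_one (mem_sphere_zero_iff_norm.mp x.2)
  have hpyth := Real.sin_sq_add_cos_sq θ
  have e1 : ((x : ℍ[ℝ]).re * Real.sin θ) ^ 2 = ((x : ℍ[ℝ]).imJ * Real.cos θ) ^ 2 := by
    have : (x : ℍ[ℝ]).re * Real.sin θ = -((x : ℍ[ℝ]).imJ * Real.cos θ) := by linarith
    rw [this]; ring
  have e2 : ((x : ℍ[ℝ]).imI * Real.sin θ) ^ 2 = ((x : ℍ[ℝ]).imK * Real.cos θ) ^ 2 := by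
    have : (x : ℍ[ℝ]).imI * Real.sin θ = -((x : ℍ[ℝ]).imK * Real.cos θ) := by linarith
    rw [this]; ring
  have key : ((x : ℍ[ℝ]).re ^ 2 + (x : ℍ[ℝ]).imI ^ 2) * (Real.sin θ ^ 2 + Real.cos θ ^ 2)
      = Real.cos θ ^ 2 * ((x : ℍ[ℝ]).re ^ 2 + (x : ℍ[ℝ]).imI ^ 2 + (x : ℍ[ℝ]).imJ ^ 2
        + (x : ℍ[ℝ]).imK ^ 2) := by
    linear_combination e1 + e2
  rw [hpyth, hnorm, mul_one, mul_one] at key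
  exact key

lemma measurableSet_Z1 : MeasurableSet Z1 := isClosed_Z1.measurableSet

lemma measure_Z1_zero : muS3 Z1 = 0 := by
  by_contra hne
  obtain ⟨N, hN⟩ := ENNReal.exists_inv_nat_lt hne
  set A : ℕ → Set S3 := fun k => (fun x : S3 => x * wq ((k + 1) * (π / (2 * (N + 1))))) ⁻¹' Z1
    with hA
  have hθpos : ∀ k : ℕ, (0 : ℝ) < (k + 1) * (π / (2 * (N + 1))) := by
    intro k
    apply mul_pos (by positivity)
    positivity
  have hθle : ∀ k : ℕ, k ≤ N → ((k : ℝ) + 1) * (π / (2 * (N + 1))) ≤ π / 2 := by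
    intro k hk
    have h1 : ((k : ℝ) + 1) ≤ (N : ℝ) + 1 := by exact_mod_cast Nat.succ_le_succ hk
    have h2 : (0 : ℝ) < (N : ℝ) + 1 := by positivity
    rw [div_mul_eq_div_div]
    calc ((k : ℝ) + 1) * (π / 2 / ((N : ℝ) + 1)) ≤ ((N : ℝ) + 1) * (π / 2 / ((N : ℝ) + 1)) := by
          apply mul_le_mul_of_nonneg_right h1
          positivity
      _ = π / 2 := by field_simp
  have hmemIcc : ∀ k : ℕ, k ≤ N → ((k : ℝ) + 1) * (π / (2 * (N + 1))) ∈ Set.Icc 0 π := by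
    intro k hk
    constructor
    · exact (hθpos k).le
    · calc ((k : ℝ) + 1) * (π / (2 * (N + 1))) ≤ π / 2 := hθle k hk
        _ ≤ π := by linarith [Real.pi_pos]
  -- pairwise disjointness
  have hdisj : (↑(Finset.range (N + 1)) : Set ℕ).PairwiseDisjoint A := by
    intro k hk l hl hkl
    simp only [Finset.coe_range, Set.mem_Iio] at hk hl
    simp only [Function.onFun]
    rw [Set.disjoint_left]
    intro x hxk hxl
    have h1 := memA_invariant _ x hxk
    have h2 := memA_invariant _ x hxl
    have hcos2 : Real.cos (((k : ℝ) + 1) * (π / (2 * (N + 1)))) ^ 2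
        = Real.cos (((l : ℝ) + 1) * (π / (2 * (N + 1)))) ^ 2 := by rw [← h1, ← h2]
    have hck : 0 ≤ Real.cos (((k : ℝ) + 1) * (π / (2 * (N + 1)))) := by
      apply Real.cos_nonneg_of_mem_Icc
      constructor
      · linarith [hθpos k, Real.pi_pos]
      · exact hθle k (Nat.lt_succ_iff.mp hk)
    have hcl : 0 ≤ Real.cos (((l : ℝ) + 1) * (π / (2 * (N + 1)))) := by
      apply Real.cos_nonneg_of_mem_Icc
      constructor
      · linarith [hθpos l, Real.pi_pos]
      · exact hθle l (Nat.lt_succ_iff.mp hl)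
    have hcc : Real.cos (((k : ℝ) + 1) * (π / (2 * (N + 1))))
        = Real.cos (((l : ℝ) + 1) * (π / (2 * (N + 1)))) := by
      apply le_antisymm <;> nlinarith [hcos2]
    have hθeq : ((k : ℝ) + 1) * (π / (2 * (N + 1))) = ((l : ℝ) + 1) * (π / (2 * (N + 1))) :=
      Real.injOn_cos (hmemIcc k (Nat.lt_succ_iff.mp hk)) (hmemIcc l (Nat.lt_succ_iff.mp hl)) hcc
    have hpos : (0 : ℝ) < π / (2 * (N + 1)) := by positivity
    have : (k : ℝ) = (l : ℝ) := by
      have := mul_right_cancel₀ hpos.ne' hθeq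
      linarith
    exact hkl (by exact_mod_cast this)
  have hAmeas : ∀ k : ℕ, MeasurableSet (A k) := by
    intro k
    exact (measurable_mul_const _) measurableSet_Z1
  have hAval : ∀ k : ℕ, muS3 (A k) = muS3 Z1 := by
    intro k
    rw [hA]
    rw [← Measure.map_apply (measurable_mul_const _) measurableSet_Z1,
      map_mul_right_eq_self]
  have hsum : muS3 (⋃ k ∈ Finset.range (N + 1), A k)
      = ∑ k ∈ Finset.range (N + 1), muS3 (A k) :=
    measure_biUnion_finset hdisj fun k _ => hAmeas k
  have hle1 : ((N : ℝ≥0∞) + 1) * muS3 Z1 ≤ 1 := by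
    calc ((N : ℝ≥0∞) + 1) * muS3 Z1
        = ∑ _k ∈ Finset.range (N + 1), muS3 Z1 := by
          rw [Finset.sum_const, Finset.card_range, nsmul_eq_mul]
          push_cast
          ring
      _ = muS3 (⋃ k ∈ Finset.range (N + 1), A k) := by
          rw [hsum]
          exact (Finset.sum_congr rfl fun k _ => (hAval k).symm)
      _ ≤ 1 := by
          rw [← measure_univ (μ := muS3)]
          exact measure_mono (Set.subset_univ _)
  have hgt : ((N : ℝ≥0∞) + 1) * muS3 Z1 > 1 := by
    have hNlt : ((N : ℝ≥0∞) + 1)⁻¹ < muS3 Z1 := by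
      apply lt_of_le_of_lt _ hN
      apply ENNReal.inv_le_inv.mpr
      exact le_self_add
    calc (1 : ℝ≥0∞) = ((N : ℝ≥0∞) + 1) * ((N : ℝ≥0∞) + 1)⁻¹ := by
          rw [ENNReal.mul_inv_cancel (lt_of_lt_of_le zero_lt_one le_add_self).ne'
            (by simp : ((N : ℝ≥0∞) + 1) ≠ ⊤)]
      _ < ((N : ℝ≥0∞) + 1) * muS3 Z1 := by
          refine ENNReal.mul_lt_mul_right (lt_of_lt_of_le zero_lt_one le_add_self).ne'
            (by simp : ((N : ℝ≥0∞) + 1) ≠ ⊤) ?_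
          exact hNlt
  exact absurd hle1 (not_le.mpr hgt)

lemma measure_Z2_zero : muS3 Z2 = 0 := by
  have hset : (fun x : S3 => x * qj) ⁻¹' Z1 = Z2 := by
    ext x
    simp only [Set.mem_preimage, Z1, Z2, Set.mem_setOf_eq, Metric.unitSphere.coe_mul]
    have hb1 : ((qj : S3) : ℍ[ℝ]).re = 0 := rfl
    have hb2 : ((qj : S3) : ℍ[ℝ]).imI = 0 := rfl
    have hb3 : ((qj : S3) : ℍ[ℝ]).imJ = 1 := rfl
    have hb4 : ((qj : S3) : ℍ[ℝ]).imK = 0 := rfl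
    rw [Quaternion.imJ_mul, Quaternion.imK_mul, hb1, hb2, hb3, hb4]
    constructor
    · rintro ⟨h1, h2⟩; constructor <;> linarith
    · rintro ⟨h1, h2⟩; constructor <;> (rw [h1, h2]; ring)
  rw [← hset, ← Measure.map_apply (measurable_mul_const _) measurableSet_Z1,
    map_mul_right_eq_self]
  exact measure_Z1_zero

lemma measure_Zball_zero : muS3 Zball = 0 := by
  apply le_antisymm _ bot_le
  calc muS3 Zball ≤ muS3 Z1 + muS3 Z2 := measure_union_le _ _
    _ = 0 := by rw [measure_Z1_zero, measure_Z2_zero, add_zero]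

end SuttonAux

namespace SuttonAux

variable {n : ℕ}

/-- The (extended) complex structure on `Euc n` given by left multiplication by `i`. -/
def Kmap (h4 : 4 ≤ n + 1) : Euc n →ₗ[ℝ] Euc n :=
  ((iota h4).toLinearMap.comp (LinearMap.mulLeft ℝ mi)).comp (pi4 h4)

lemma Kmap_iota (h4 : 4 ≤ n + 1) (q : ℍ[ℝ]) : Kmap h4 (iota h4 q) = iota h4 (mi * q) := by
  simp only [Kmap, LinearMap.comp_apply, pi4_iota, LinearMap.mulLeft_apply,
    LinearIsometry.coe_toLinearMap]

/-- The set of tangent vectors aligned with the left complex structure. -/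
def Tset (h4 : 4 ≤ n + 1) : Set (UnitTangentSphere n : Set (Euc n × Euc n)) :=
  {p | (p : Euc n × Euc n).2 = Kmap h4 (p : Euc n × Euc n).1
    ∨ (p : Euc n × Euc n).2 = -Kmap h4 (p : Euc n × Euc n).1}

lemma measurableSet_Tset (h4 : 4 ≤ n + 1) : MeasurableSet (Tset h4) := by
  have h1 : Continuous fun p : (UnitTangentSphere n : Set (Euc n × Euc n)) =>
      ((p : Euc n × Euc n)).1 := continuous_fst.comp continuous_subtype_val
  have h2 : Continuous fun p : (UnitTangentSphere n : Set (Euc n × Euc n)) =>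
      ((p : Euc n × Euc n)).2 := continuous_snd.comp continuous_subtype_val
  have hK : Continuous (Kmap h4) := (Kmap h4).continuous_of_finiteDimensional
  exact ((isClosed_eq h2 (hK.comp h1)).union (isClosed_eq h2 (hK.comp h1).neg)).measurableSet

lemma psiLp_mem_Tset (h4 : 4 ≤ n + 1) (p : S3 × SC) : PsiLp h4 p ∈ Tset h4 := by
  left
  show iota h4 (Quaternion.coeComplex (p.2 : ℂ) * (mi * (p.1 : ℍ[ℝ])))
      = Kmap h4 (iota h4 (Quaternion.coeComplex (p.2 : ℂ) * (p.1 : ℍ[ℝ])))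
  rw [Kmap_iota]
  congr 1
  rw [← mul_assoc, coeComplex_mul_mi, mul_assoc]

lemma psiLm_mem_Tset (h4 : 4 ≤ n + 1) (p : S3 × SC) : PsiLm h4 p ∈ Tset h4 := by
  right
  show iota h4 (Quaternion.coeComplex (p.2 : ℂ) * (-mi * (p.1 : ℍ[ℝ])))
      = -Kmap h4 (iota h4 (Quaternion.coeComplex (p.2 : ℂ) * (p.1 : ℍ[ℝ])))
  rw [Kmap_iota, ← _root_.map_neg]
  congr 1
  rw [neg_mul, mul_neg, ← mul_assoc, coeComplex_mul_mi, mul_assoc]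

lemma nu1_Tset (h4 : 4 ≤ n + 1) : nu1 h4 (Tset h4) = 1 := by
  have hc1 : Continuous (PsiLp h4) := continuous_PsiL h4 _ _ _
  have hc2 : Continuous (PsiLm h4) := continuous_PsiL h4 _ _ _
  have hm1 : mBase.map (PsiLp h4) (Tset h4) = 1 := by
    rw [Measure.map_apply hc1.measurable (measurableSet_Tset h4)]
    have : PsiLp h4 ⁻¹' Tset h4 = Set.univ := Set.eq_univ_of_forall (psiLp_mem_Tset h4)
    rw [this, measure_univ]
  have hm2 : mBase.map (PsiLm h4) (Tset h4) = 1 := by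
    rw [Measure.map_apply hc2.measurable (measurableSet_Tset h4)]
    have : PsiLm h4 ⁻¹' Tset h4 = Set.univ := Set.eq_univ_of_forall (psiLm_mem_Tset h4)
    rw [this, measure_univ]
  rw [nu1, Measure.add_apply, Measure.smul_apply, Measure.smul_apply, hm1, hm2]
  rw [smul_eq_mul, mul_one, ← two_mul, ENNReal.mul_inv_cancel] <;> norm_num

lemma psiR_preimage (h4 : 4 ≤ n + 1) (e : ℍ[ℝ]) (he : ‖e‖ = 1) (hre : e.re = 0)
    (hpm : e = mi ∨ e = -mi) :
    (PsiR h4 e he hre) ⁻¹' Tset h4 ⊆ (fun p : S3 × SC => p.1 * uC p.2) ⁻¹' Zball := by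
  intro p hp
  set y : ℍ[ℝ] := (p.1 : ℍ[ℝ]) * Quaternion.coeComplex (p.2 : ℂ) with hy
  have hcoe : ((p.1 * uC p.2 : S3) : ℍ[ℝ]) = y := by rw [Metric.unitSphere.coe_mul, uC_coe]
  have hfst : ((PsiR h4 e he hre p : Euc n × Euc n)).1 = iota h4 y := rfl
  have hsnd : ((PsiR h4 e he hre p : Euc n × Euc n)).2 = iota h4 (y * e) := rfl
  have hcases : y * e = mi * y ∨ y * e = -(mi * y) := by
    rcases hp with h | h
    · left
      rw [hfst, hsnd, Kmap_iota] at h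
      exact (iota h4).injective h
    · right
      rw [hfst, hsnd, Kmap_iota, ← _root_.map_neg] at h
      exact (iota h4).injective h
  show (p.1 * uC p.2 : S3) ∈ Zball
  rcases hpm with rfl | rfl
  · rcases hcases with h | h
    · exact Or.inl (comm_mi (by rw [hcoe]; exact h))
    · exact Or.inr (anti_mi (by rw [hcoe]; exact h))
  · rcases hcases with h | h
    · have h' : y * mi = -(mi * y) := by
        rw [mul_neg] at h
        exact neg_eq_iff_eq_neg.mp h
      exact Or.inr (anti_mi (by rw [hcoe]; exact h'))
    · have h' : y * mi = mi * y := by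
        rw [mul_neg] at h
        exact neg_inj.mp h
      exact Or.inl (comm_mi (by rw [hcoe]; exact h'))

lemma nu2_Tset (h4 : 4 ≤ n + 1) : nu2 h4 (Tset h4) = 0 := by
  have hg : Continuous (fun p : S3 × SC => p.1 * uC p.2) :=
    continuous_fst.mul (continuous_uC.comp continuous_snd)
  have hB : mBase ((fun p : S3 × SC => p.1 * uC p.2) ⁻¹' Zball) = 0 := by
    rw [← Measure.map_apply hg.measurable measurableSet_Zball,
      map_mul_into_right continuous_uC]
    exact measure_Zball_zero
  have hc1 : Continuous (PsiRp h4) := continuous_PsiR h4 _ _ _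
  have hc2 : Continuous (PsiRm h4) := continuous_PsiR h4 _ _ _
  have hm1 : mBase.map (PsiRp h4) (Tset h4) = 0 := by
    rw [Measure.map_apply hc1.measurable (measurableSet_Tset h4)]
    exact measure_mono_null (psiR_preimage h4 mi norm_mi mi_re (Or.inl rfl)) hB
  have hm2 : mBase.map (PsiRm h4) (Tset h4) = 0 := by
    rw [Measure.map_apply hc2.measurable (measurableSet_Tset h4)]
    exact measure_mono_null (psiR_preimage h4 (-mi) norm_nmi nmi_re (Or.inr rfl)) hB
  rw [nu2, Measure.add_apply, Measure.smul_apply, Measure.smul_apply, hm1, hm2]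
  simp

lemma nu1_ne_nu2 (h4 : 4 ≤ n + 1) : nu1 h4 ≠ nu2 h4 := by
  intro h
  have h1 := nu1_Tset h4
  rw [h, nu2_Tset h4] at h1
  exact zero_ne_one (α := ℝ≥0∞) h1

end SuttonAux

-- MAIN8

/-- **Sutton's theorem (probability measure form).** For `j ≥ 2`, there are two
distinct probability measures on the unit tangent bundle `S(S^{2j})` of the
standard round sphere of constant curvature 1, each invariant under the
geodesic flow `G_t` for all `t` and under the flip map `σ`, whose pushforwards
under the canonical projection `π : S(S^{2j}) → S^{2j}` coincide. -/
theorem exists_even_invariant_probabilityMeasures_ne_same_proj (j : ℕ) (hj : 2 ≤ j) :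
    ∃ μ ν : Measure (UnitTangentSphere (2 * j)),
      IsProbabilityMeasure μ ∧ IsProbabilityMeasure ν ∧
      μ ≠ ν ∧
      (∀ t : ℝ, μ.map (geodesicFlow (2 * j) t) = μ) ∧
      μ.map (flipMap (2 * j)) = μ ∧
      (∀ t : ℝ, ν.map (geodesicFlow (2 * j) t) = ν) ∧
      ν.map (flipMap (2 * j)) = ν ∧
      μ.map (sphereProj (2 * j)) = ν.map (sphereProj (2 * j)) := by
  have h4 : 4 ≤ 2 * j + 1 := by omega
  refine ⟨SuttonAux.nu1 h4, SuttonAux.nu2 h4, inferInstance, inferInstance,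
    SuttonAux.nu1_ne_nu2 h4, SuttonAux.nu1_flow h4, SuttonAux.nu1_flip h4,
    SuttonAux.nu2_flow h4, SuttonAux.nu2_flip h4, ?_⟩
  rw [SuttonAux.nu1_proj h4, SuttonAux.nu2_proj h4]
end
end
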